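/- arXiv:nlin/0304009 — 2 statements merged into one kernel-verified Lean document; each statement's English description precedes it below -/
import Mathlib

section
/- Let δ ≥ 3 be an integer and let K be a δ-PHO Hamiltonian with coefficients v_0, …, v_δ. Then K is separable within a rotation of Cartesian coordinates if and only if the 2×(δ−1) matrix M(K), with first row (v_0−v_2, v_1−v_3, …, v_{δ−2}−v_δ) and second row (2v_1, 2v_2, …, 2v_{δ−1}), has rank 1. -/
open MvPolynomial Finset

noncomputable section

/-- Formal power series in the four variables `ξ₁, ξ₂, η₁, η₂`
(indices `0, 1, 2, 3`; for Hamiltonians the variables are read as `q₁, q₂, p₁, p₂`). -/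
abbrev PS := MvPowerSeries (Fin 4) ℝ

/-- total degree of a monomial exponent -/
def degOf (d : Fin 4 →₀ ℕ) : ℕ := d.sum fun _ n => n

/-- homogeneous part of degree `k` of a formal power series -/
def homPart (k : ℕ) (f : PS) : PS := fun d => if degOf d = k then f d else 0

/-- partial derivative of a formal power series with respect to the `i`-th variable -/
def pdPS (i : Fin 4) (f : PS) : PS :=
  fun d => ((d i : ℝ) + 1) * f (d + Finsupp.single i 1)

/-- the operator `D = Σ_j (ξ_j ∂/∂η_j − η_j ∂/∂ξ_j)` (variables 0,1 = ξ; 2,3 = η) -/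
def Dop (f : PS) : PS :=
  MvPowerSeries.X 0 * pdPS 2 f + MvPowerSeries.X 1 * pdPS 3 f
    - MvPowerSeries.X 2 * pdPS 0 f - MvPowerSeries.X 3 * pdPS 1 f

/-- substitution of formal power series (having zero constant term) into a
formal power series, defined coefficientwise through truncations -/
def substPS (a : Fin 4 → PS) (f : PS) : PS := fun d =>
  MvPowerSeries.coeff d
    (MvPolynomial.aeval a
      (MvPowerSeries.trunc ℝ (Finsupp.equivFunOnFinite.symm fun _ => degOf d + 1) f))

/-- `G` is in Birkhoff-Gustavson normal form up to degree `ρ`: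
`G = (1/2)Σ_j (η_j² + ξ_j²) + Σ_{k ≥ 3} G_k` with `D G_k = 0` for `3 ≤ k ≤ ρ`. -/
def IsBGNF (G : PS) (ρ : ℕ) : Prop :=
  homPart 0 G = 0 ∧ homPart 1 G = 0 ∧
  homPart 2 G = (2⁻¹ : ℝ) • (MvPowerSeries.X 0 ^ 2 + MvPowerSeries.X 1 ^ 2
      + MvPowerSeries.X 2 ^ 2 + MvPowerSeries.X 3 ^ 2) ∧
  ∀ k, 3 ≤ k → k ≤ ρ → Dop (homPart k G) = 0

/-- `W(q,η) = Σ_j q_j η_j + Σ_{k ≥ 3} W_k(q,η)` normalizes the Hamiltonian `K` into the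
formal power series `G` up to degree `ρ`: the identity `G(∂W/∂η, η) = K(q, ∂W/∂q)` holds
and each `W_k`, `3 ≤ k ≤ ρ`, lies in the image of `D` -/
def Normalizes (K : MvPolynomial (Fin 4) ℝ) (W G : PS) (ρ : ℕ) : Prop :=
  homPart 0 W = 0 ∧ homPart 1 W = 0 ∧
  homPart 2 W = MvPowerSeries.X 0 * MvPowerSeries.X 2
      + MvPowerSeries.X 1 * MvPowerSeries.X 3 ∧
  (∀ k, 3 ≤ k → k ≤ ρ → ∃ u : PS, homPart k u = u ∧ Dop u = homPart k W) ∧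
  substPS ![pdPS 2 W, pdPS 3 W, MvPowerSeries.X 2, MvPowerSeries.X 3] G =
    MvPolynomial.aeval ![MvPowerSeries.X 0, MvPowerSeries.X 1, pdPS 0 W, pdPS 1 W] K

/-- `G` is a BGNF of `K` up to degree `ρ` -/
def IsBGNFof (K : MvPolynomial (Fin 4) ℝ) (G : PS) (ρ : ℕ) : Prop :=
  IsBGNF G ρ ∧ ∃ W : PS, Normalizes K W G ρ

/-- `K` and `K'` share their BGNF up to degree `ρ` -/
def SharesBGNF (K K' : MvPolynomial (Fin 4) ℝ) (ρ : ℕ) : Prop :=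
  ∃ G G' : PS, IsBGNFof K G ρ ∧ IsBGNFof K' G' ρ ∧
    ∀ k, k ≤ ρ → homPart k G = homPart k G'

/-- the perturbing homogeneous potential `V(q) = Σ_{h=0}^{δ} v_h C(δ,h) q₁^h q₂^{δ-h}` -/
def Vpoly (δ : ℕ) (v : ℕ → ℝ) : MvPolynomial (Fin 4) ℝ :=
  ∑ h ∈ Finset.range (δ + 1),
    MvPolynomial.C (v h * (δ.choose h : ℝ)) * X 0 ^ h * X 1 ^ (δ - h)

/-- the `δ`-PHO Hamiltonian `K(q,p) = (1/2)Σ_j (p_j² + q_j²) + V(q)` -/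
def PHO (δ : ℕ) (v : ℕ → ℝ) : MvPolynomial (Fin 4) ℝ :=
  MvPolynomial.C (2⁻¹ : ℝ) * (X 0 ^ 2 + X 1 ^ 2 + X 2 ^ 2 + X 3 ^ 2) + Vpoly δ v

/-- the change of variables given by the rotation `σ(ψ)⁻¹` applied simultaneously
to `(q₁,q₂)` and `(p₁,p₂)` -/
def rot4 (ψ : ℝ) (P : MvPolynomial (Fin 4) ℝ) : MvPolynomial (Fin 4) ℝ :=
  MvPolynomial.aeval
    ![MvPolynomial.C (Real.cos ψ) * X 0 + MvPolynomial.C (Real.sin ψ) * X 1,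
      MvPolynomial.C (-Real.sin ψ) * X 0 + MvPolynomial.C (Real.cos ψ) * X 1,
      MvPolynomial.C (Real.cos ψ) * X 2 + MvPolynomial.C (Real.sin ψ) * X 3,
      MvPolynomial.C (-Real.sin ψ) * X 2 + MvPolynomial.C (Real.cos ψ) * X 3] P

/-- separability of the `δ`-PHO with coefficients `v` within the rotation of
Cartesian coordinates with angle `ψ`: `V(σ(ψ)⁻¹ q) = a q₂^δ + b q₁^δ`, `(a,b) ≠ (0,0)` -/
def SepAt (δ : ℕ) (v : ℕ → ℝ) (ψ : ℝ) : Prop :=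
  ∃ a b : ℝ, ¬(a = 0 ∧ b = 0) ∧
    rot4 ψ (Vpoly δ v) = MvPolynomial.C a * X 1 ^ δ + MvPolynomial.C b * X 0 ^ δ

/-- separability within a rotation of Cartesian coordinates -/
def SepRot (δ : ℕ) (v : ℕ → ℝ) : Prop :=
  ∃ ψ ∈ Set.Ico (0 : ℝ) (2 * Real.pi), SepAt δ v ψ


/-- the `2 × (δ-1)` matrix `M(K)` associated with a `δ`-PHO: its `(1-based)` `a`-th column
is `(v_{a-1} - v_{a+1}, 2 v_a)` -/
def Mmat (δ : ℕ) (v : ℕ → ℝ) : Matrix (Fin 2) (Fin (δ - 1)) ℝ :=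
  Matrix.of fun i j => if i = 0 then v j.1 - v (j.1 + 2) else 2 * v (j.1 + 1)

abbrev P4 := MvPolynomial (Fin 4) ℝ

lemma mono_eq (δ g : ℕ) (w : ℝ) : C w * (X 0 : P4)^g * X 1^(δ-g)
    = monomial (Finsupp.single (0:Fin 4) g + Finsupp.single 1 (δ-g)) w := by
  rw [X_pow_eq_monomial, X_pow_eq_monomial, mul_assoc, monomial_mul, C_mul_monomial]; norm_num

lemma single_inj (δ g h : ℕ) (hs : Finsupp.single (0:Fin 4) g + Finsupp.single 1 (δ-g)
    = Finsupp.single (0:Fin 4) h + Finsupp.single 1 (δ-h)) : g = h := by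
  have := DFunLike.congr_fun hs 0
  simpa using this

lemma coeff_extract (δ h : ℕ) (hh : h ≤ δ) (w : ℕ → ℝ) :
    MvPolynomial.coeff (Finsupp.single (0:Fin 4) h + Finsupp.single 1 (δ-h))
      (∑ g ∈ Finset.range (δ+1), C (w g) * (X 0 : P4)^g * X 1^(δ-g)) = w h := by
  rw [MvPolynomial.coeff_sum]
  rw [Finset.sum_eq_single h]
  · rw [mono_eq, coeff_monomial, if_pos rfl]
  · intro g hg hne
    rw [mono_eq, coeff_monomial, if_neg]
    intro hs
    exact hne (single_inj δ g h hs)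
  · intro hmem
    exact absurd (Finset.mem_range.2 (Nat.lt_succ_of_le hh)) hmem

lemma expand_pow (δ : ℕ) (a b c s : ℝ) :
    C a * (C s * (X 0 : P4) + C c * X 1)^δ + C b * (C c * (X 0 : P4) + C (-s) * X 1)^δ
    = ∑ h ∈ Finset.range (δ+1),
        C ((a * (s^h * c^(δ-h)) + b * (c^h * (-s)^(δ-h))) * (δ.choose h : ℝ)) * X 0^h * X 1^(δ-h) := by
  rw [add_pow, add_pow, Finset.mul_sum, Finset.mul_sum, ← Finset.sum_add_distrib]
  apply Finset.sum_congr rfl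
  intro h hh
  simp only [mul_pow, map_mul, map_add, map_pow, map_natCast, map_neg]
  ring

lemma rot4_rot4 (ψ φ : ℝ) (P : P4) : rot4 ψ (rot4 φ P) = rot4 (φ + ψ) P := by
  unfold rot4
  rw [← AlgHom.comp_apply, comp_aeval]
  have h : (fun i => (aeval
          ![C (Real.cos ψ) * (X 0 : P4) + C (Real.sin ψ) * X 1, C (-Real.sin ψ) * X 0 + C (Real.cos ψ) * X 1,
            C (Real.cos ψ) * X 2 + C (Real.sin ψ) * X 3, C (-Real.sin ψ) * X 2 + C (Real.cos ψ) * X 3])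
        (![C (Real.cos φ) * X 0 + C (Real.sin φ) * X 1, C (-Real.sin φ) * X 0 + C (Real.cos φ) * X 1,
            C (Real.cos φ) * X 2 + C (Real.sin φ) * X 3, C (-Real.sin φ) * X 2 + C (Real.cos φ) * X 3]
          i))
      = ![C (Real.cos (φ + ψ)) * X 0 + C (Real.sin (φ + ψ)) * X 1,
        C (-Real.sin (φ + ψ)) * X 0 + C (Real.cos (φ + ψ)) * X 1,
        C (Real.cos (φ + ψ)) * X 2 + C (Real.sin (φ + ψ)) * X 3,
        C (-Real.sin (φ + ψ)) * X 2 + C (Real.cos (φ + ψ)) * X 3] := by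
    funext i
    fin_cases i <;> simp [Real.cos_add, Real.sin_add] <;> ring
  rw [h]

lemma rot4_zero (P : P4) : rot4 0 P = P := by
  unfold rot4
  have : ![MvPolynomial.C (Real.cos 0) * (X 0 : P4) + MvPolynomial.C (Real.sin 0) * X 1,
      MvPolynomial.C (-Real.sin 0) * X 0 + MvPolynomial.C (Real.cos 0) * X 1,
      MvPolynomial.C (Real.cos 0) * X 2 + MvPolynomial.C (Real.sin 0) * X 3,
      MvPolynomial.C (-Real.sin 0) * X 2 + MvPolynomial.C (Real.cos 0) * X 3] = X := by
    funext i; fin_cases i <;> simp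
  rw [this]
  exact aeval_X_left_apply P

lemma Vpoly_eq_pows (δ : ℕ) (v : ℕ → ℝ) (a b c s : ℝ)
    (hv : ∀ h ≤ δ, v h = a * (s^h * c^(δ-h)) + b * (c^h * (-s)^(δ-h))) :
    Vpoly δ v = C a * (C s * (X 0 : P4) + C c * X 1)^δ + C b * (C c * (X 0 : P4) + C (-s) * X 1)^δ := by
  rw [expand_pow]
  apply Finset.sum_congr rfl
  intro h hh
  rw [hv h (Nat.lt_succ_iff.mp (Finset.mem_range.mp hh))]

lemma rot_lin1 (ψ : ℝ) : rot4 ψ (C (Real.sin ψ) * (X 0 : P4) + C (Real.cos ψ) * X 1) = X 1 := by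
  have h1 : Real.sin ψ * Real.cos ψ + Real.cos ψ * -Real.sin ψ = 0 := by ring
  have h2 : Real.sin ψ * Real.sin ψ + Real.cos ψ * Real.cos ψ = 1 := by
    have := Real.sin_sq_add_cos_sq ψ; nlinarith [this]
  simp only [rot4, map_add, map_mul, aeval_C, aeval_X]
  simp only [Matrix.cons_val_zero, Matrix.cons_val_one, Matrix.head_cons]
  rw [show (algebraMap ℝ P4) (Real.sin ψ) = C (Real.sin ψ) from rfl,
      show (algebraMap ℝ P4) (Real.cos ψ) = C (Real.cos ψ) from rfl]
  rw [mul_add, mul_add, ← mul_assoc, ← mul_assoc, ← mul_assoc, ← mul_assoc,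
      ← C_mul, ← C_mul, ← C_mul, ← C_mul]
  rw [add_add_add_comm, ← add_mul, ← add_mul, ← C_add, ← C_add, h1, h2]
  simp

lemma rot_lin2 (ψ : ℝ) : rot4 ψ (C (Real.cos ψ) * (X 0 : P4) + C (-Real.sin ψ) * X 1) = X 0 := by
  have h1 : Real.cos ψ * Real.cos ψ + -Real.sin ψ * -Real.sin ψ = 1 := by
    have := Real.sin_sq_add_cos_sq ψ; nlinarith [this]
  have h2 : Real.cos ψ * Real.sin ψ + -Real.sin ψ * Real.cos ψ = 0 := by ring
  simp only [rot4, map_add, map_mul, aeval_C, aeval_X]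
  simp only [Matrix.cons_val_zero, Matrix.cons_val_one, Matrix.head_cons]
  rw [show (algebraMap ℝ P4) (Real.cos ψ) = C (Real.cos ψ) from rfl,
      show (algebraMap ℝ P4) (-Real.sin ψ) = C (-Real.sin ψ) from rfl]
  rw [mul_add, mul_add, ← mul_assoc, ← mul_assoc, ← mul_assoc, ← mul_assoc,
      ← C_mul, ← C_mul, ← C_mul, ← C_mul]
  rw [add_add_add_comm, ← add_mul, ← add_mul, ← C_add, ← C_add, h1, h2]
  simp

lemma sepAt_iff (δ : ℕ) (v : ℕ → ℝ) (ψ : ℝ) :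
    SepAt δ v ψ ↔ ∃ a b : ℝ, ¬(a = 0 ∧ b = 0) ∧ ∀ h ≤ δ,
      v h = a * ((Real.sin ψ)^h * (Real.cos ψ)^(δ-h))
          + b * ((Real.cos ψ)^h * (-Real.sin ψ)^(δ-h)) := by
  constructor
  · rintro ⟨a, b, hab, heq⟩
    refine ⟨a, b, hab, ?_⟩
    have key : Vpoly δ v
        = C a * (C (Real.sin ψ) * (X 0 : P4) + C (Real.cos ψ) * X 1)^δ
          + C b * (C (Real.cos ψ) * (X 0 : P4) + C (-Real.sin ψ) * X 1)^δ := by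
      have h0 : rot4 (-ψ) (rot4 ψ (Vpoly δ v)) = Vpoly δ v := by
        rw [rot4_rot4, add_neg_cancel, rot4_zero]
      rw [heq] at h0
      rw [← h0]
      simp only [rot4, map_add, map_mul, map_pow, aeval_C, aeval_X]
      simp only [Matrix.cons_val_zero, Matrix.cons_val_one, Matrix.head_cons,
        Real.cos_neg, Real.sin_neg, neg_neg]
      rfl
    rw [expand_pow δ a b (Real.cos ψ) (Real.sin ψ)] at key
    unfold Vpoly at key
    intro h hh
    have e := congrArg (MvPolynomial.coeff (Finsupp.single (0:Fin 4) h + Finsupp.single 1 (δ-h))) key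
    rw [coeff_extract δ h hh, coeff_extract δ h hh] at e
    have hch : (δ.choose h : ℝ) ≠ 0 := Nat.cast_ne_zero.2 (Nat.choose_pos hh).ne'
    exact mul_right_cancel₀ hch e
  · rintro ⟨a, b, hab, hv⟩
    refine ⟨a, b, hab, ?_⟩
    rw [Vpoly_eq_pows δ v a b (Real.cos ψ) (Real.sin ψ) hv]
    have l1 := rot_lin1 ψ
    have l2 := rot_lin2 ψ
    unfold rot4 at l1 l2 ⊢
    rw [map_add, map_mul, map_mul, map_pow, map_pow, aeval_C, aeval_C, l1, l2,
      MvPolynomial.algebraMap_eq]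

lemma rank_eq_zero_of (δ : ℕ) (v : ℕ → ℝ) (h : Matrix.rank (Mmat δ v) = 0) :
    Mmat δ v = 0 := by
  rw [Matrix.rank_eq_finrank_span_row] at h
  have hbot := Submodule.finrank_eq_zero.mp h
  ext i j
  have hmem : (Mmat δ v).row i ∈ Submodule.span ℝ (Set.range (Mmat δ v).row) :=
    Submodule.subset_span (Set.mem_range_self i)
  rw [hbot, Submodule.mem_bot] at hmem
  have := congrFun hmem j
  simpa using this

lemma rank_le_one_of_factor (δ : ℕ) (u : Fin 2 → ℝ) (w : Fin (δ-1) → ℝ)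
    (hM : Mmat δ v = Matrix.of (fun i j => u i * w j)) : Matrix.rank (Mmat δ v) ≤ 1 := by
  have hfac : Mmat δ v = (Matrix.of fun i (_ : Fin 1) => u i) * (Matrix.of fun (_ : Fin 1) j => w j) := by
    rw [hM]
    ext i j
    simp [Matrix.mul_apply]
  rw [hfac]
  calc Matrix.rank _ ≤ Matrix.rank (Matrix.of fun i (_ : Fin 1) => u i) := Matrix.rank_mul_le_left _ _
    _ ≤ Fintype.card (Fin 1) := Matrix.rank_le_card_width _
    _ = 1 := by simp

lemma Mmat_factor (n : ℕ) (v : ℕ → ℝ) (a b c s : ℝ)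
    (hv : ∀ h ≤ n+3, v h = a*(s^h*c^(n+3-h)) + b*(c^h*(-s)^(n+3-h))) :
    Mmat (n+3) v = Matrix.of (fun (i : Fin 2) (j : Fin (n+3-1)) =>
      (if i = 0 then c^2 - s^2 else 2*(s*c)) *
      (a*s^(j:ℕ)*c^(n+1-(j:ℕ)) - b*c^(j:ℕ)*(-s)^(n+1-(j:ℕ)))) := by
  ext i j
  have hj : (j:ℕ) ≤ n + 1 := by omega
  obtain ⟨m, hm⟩ : ∃ m, n + 1 - (j:ℕ) = m := ⟨_, rfl⟩
  have e0 : n + 3 - (j:ℕ) = m + 2 := by omega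
  have e1 : n + 3 - ((j:ℕ) + 1) = m + 1 := by omega
  have e2 : n + 3 - ((j:ℕ) + 2) = m := by omega
  have h0 := hv (j:ℕ) (by omega)
  have h1 := hv ((j:ℕ) + 1) (by omega)
  have h2 := hv ((j:ℕ) + 2) (by omega)
  rw [e0] at h0; rw [e1] at h1; rw [e2] at h2
  by_cases hi : i = 0
  · subst hi
    simp only [Mmat, Matrix.of_apply, hm]
    norm_num
    rw [h0, h2]
    ring
  · simp only [Mmat, Matrix.of_apply, if_neg hi, hm]
    rw [h1]
    ring

lemma a_eval (δ : ℕ) (hδ : 1 ≤ δ) (v : ℕ → ℝ) (a b c s : ℝ) (h1 : s^2 + c^2 = 1)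
    (hv : ∀ h ≤ δ, v h = a*(s^h*c^(δ-h)) + b*(c^h*(-s)^(δ-h))) :
    a = ∑ h ∈ Finset.range (δ+1), (δ.choose h : ℝ) * (s^h * c^(δ-h)) * v h := by
  have e0 : (s*c + c*(-s) : ℝ) = 0 := by ring
  have e1 : (s*s + c*c : ℝ) = 1 := by nlinarith
  calc a = a * (s*s + c*c)^δ + b * (s*c + c*(-s))^δ := by
        rw [e0, e1, one_pow, zero_pow (by omega : δ ≠ 0)]; ring
    _ = _ := by
        rw [add_pow, add_pow, Finset.mul_sum, Finset.mul_sum, ← Finset.sum_add_distrib]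
        apply Finset.sum_congr rfl
        intro h hh
        rw [hv h (Nat.lt_succ_iff.mp (Finset.mem_range.mp hh))]
        ring

lemma b_eval (δ : ℕ) (hδ : 1 ≤ δ) (v : ℕ → ℝ) (a b c s : ℝ) (h1 : s^2 + c^2 = 1)
    (hv : ∀ h ≤ δ, v h = a*(s^h*c^(δ-h)) + b*(c^h*(-s)^(δ-h))) :
    b = ∑ h ∈ Finset.range (δ+1), (δ.choose h : ℝ) * (c^h * (-s)^(δ-h)) * v h := by
  have e0 : (c*s + (-s)*c : ℝ) = 0 := by ring
  have e1 : (c*c + (-s)*(-s) : ℝ) = 1 := by nlinarith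
  calc b = a * (c*s + (-s)*c)^δ + b * (c*c + (-s)*(-s))^δ := by
        rw [e0, e1, one_pow, zero_pow (by omega : δ ≠ 0)]; ring
    _ = _ := by
        rw [add_pow, add_pow, Finset.mul_sum, Finset.mul_sum, ← Finset.sum_add_distrib]
        apply Finset.sum_congr rfl
        intro h hh
        rw [hv h (Nat.lt_succ_iff.mp (Finset.mem_range.mp hh))]
        have hsq : ((-s):ℝ)^(δ-h) * ((-s))^(δ-h) = ((-s)*(-s))^(δ-h) := (mul_pow _ _ _).symm
        have hneg : ((-1:ℝ))^((δ-h)*2) = 1 := by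
          rw [pow_mul]
          rcases neg_one_pow_eq_or ℝ (δ-h) with h' | h' <;> rw [h'] <;> norm_num
        linear_combination (b * c^h * c^h * (δ.choose h : ℝ)) * hsq
          + (-2 * (c^(h*2) * s^((δ-h)*2) * (δ.choose h : ℝ) * b)) * hneg

lemma solve (n : ℕ) (v : ℕ → ℝ) (c s : ℝ) (hs : s ≠ 0) (hc : c ≠ 0) (h1 : s^2 + c^2 = 1)
    (hrec : ∀ j, j ≤ n+1 → s*c*(v (j+2)) + (c^2 - s^2) * (v (j+1)) - s*c*(v j) = 0) :
    ∃ a b : ℝ, ∀ h ≤ n+3, v h = a*(s^h*c^(n+3-h)) + b*(c^h*(-s)^(n+3-h)) := by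
  have hns : (-s) ≠ 0 := neg_ne_zero.2 hs
  have hD : ((-s)^(n+2)*c^(n+2) : ℝ) ≠ 0 := mul_ne_zero (pow_ne_zero _ hns) (pow_ne_zero _ hc)
  set a := (v 0 * (c*(-s)^(n+2)) - v 1 * (-s)^(n+3))/((-s)^(n+2)*c^(n+2)) with ha
  set b := (v 1 * c^(n+3) - v 0 * (s*c^(n+2)))/((-s)^(n+2)*c^(n+2)) with hb
  have base0 : v 0 = a*(s^0*c^(n+3-0)) + b*(c^0*(-s)^(n+3-0)) := by
    rw [ha, hb]
    rw [show n+3-0 = n+3 by omega, div_mul_eq_mul_div, div_mul_eq_mul_div, ← add_div, eq_div_iff hD]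
    linear_combination (-(v 0 * (-s)^(n+2) * c^(n+2))) * h1
  have base1 : v 1 = a*(s^1*c^(n+3-1)) + b*(c^1*(-s)^(n+3-1)) := by
    rw [ha, hb]
    rw [show n+3-1 = n+2 by omega, div_mul_eq_mul_div, div_mul_eq_mul_div, ← add_div, eq_div_iff hD]
    linear_combination (-(v 1 * (-s)^(n+2) * c^(n+2))) * h1
  refine ⟨a, b, ?_⟩
  have key : ∀ k, k ≤ n+2 → (v k = a*(s^k*c^(n+3-k)) + b*(c^k*(-s)^(n+3-k))
      ∧ v (k+1) = a*(s^(k+1)*c^(n+3-(k+1))) + b*(c^(k+1)*(-s)^(n+3-(k+1)))) := by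
    intro k
    induction k with
    | zero => intro _; exact ⟨base0, base1⟩
    | succ k ih =>
      intro hk
      obtain ⟨ih0, ih1⟩ := ih (by omega)
      refine ⟨ih1, ?_⟩
      obtain ⟨m, hm⟩ : ∃ m, n + 1 - k = m := ⟨_, rfl⟩
      have e0 : n + 3 - k = m + 2 := by omega
      have e1 : n + 3 - (k+1) = m + 1 := by omega
      have e2 : n + 3 - (k+2) = m := by omega
      have hfrec : s*c*((a*(s^(k+2)*c^m) + b*(c^(k+2)*(-s)^m)))
          + (c^2 - s^2) * (a*(s^(k+1)*c^(m+1)) + b*(c^(k+1)*(-s)^(m+1)))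
          - s*c*(a*(s^k*c^(m+2)) + b*(c^k*(-s)^(m+2))) = 0 := by ring
      have hr := hrec k (by omega)
      rw [ih0, ih1] at hr
      rw [e0] at hr
      rw [e1] at hr
      show v (k+2) = a*(s^(k+2)*c^(n+3-(k+2))) + b*(c^(k+2)*(-s)^(n+3-(k+2)))
      have hcan : s*c*(v (k+2)) = s*c*((a*(s^(k+2)*c^m) + b*(c^(k+2)*(-s)^m))) := by
        linarith [hr, hfrec]
      have := mul_left_cancel₀ (mul_ne_zero hs hc) hcan
      rw [e2]
      exact this
  intro h hh
  by_cases hcase : h ≤ n+2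
  · exact (key h hcase).1
  · have : h = n + 3 := by omega
    subst this
    exact (key (n+2) (le_refl _)).2

lemma vzero_of_Mzero (n : ℕ) (v : ℕ → ℝ) (hM : Mmat (n+3) v = 0) : ∀ h ≤ n+3, v h = 0 := by
  have ent : ∀ (i : Fin 2) (j : Fin (n+3-1)), Mmat (n+3) v i j = 0 := by
    intro i j; rw [hM]; rfl
  have r1 : ∀ j : ℕ, j ≤ n+1 → v (j+1) = 0 := by
    intro j hj
    have := ent 1 ⟨j, by omega⟩
    simp only [Mmat, Matrix.of_apply] at this
    rw [if_neg (by decide : (1:Fin 2) ≠ 0)] at this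
    linarith
  have r0 : ∀ j : ℕ, j ≤ n+1 → v j = v (j+2) := by
    intro j hj
    have := ent 0 ⟨j, by omega⟩
    simp only [Mmat, Matrix.of_apply] at this
    norm_num at this
    linarith
  intro h hh
  rcases Nat.eq_zero_or_pos h with h0 | hpos
  · subst h0
    rw [r0 0 (by omega)]
    exact r1 1 (by omega)
  · by_cases hltop : h ≤ n + 2
    · obtain ⟨j, rfl⟩ : ∃ j, h = j + 1 := ⟨h - 1, by omega⟩
      exact r1 j (by omega)
    · have : h = n + 3 := by omega
      subst this
      have := r0 (n+1) (by omega)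
      rw [← this]
      exact r1 n (by omega)

lemma Mzero_of_vzero (n : ℕ) (v : ℕ → ℝ) (hz : ∀ h ≤ n+3, v h = 0) : Mmat (n+3) v = 0 := by
  ext i j
  have hj : (j : ℕ) ≤ n + 1 := by omega
  by_cases hi : i = 0
  · subst hi
    simp only [Mmat, Matrix.of_apply, Matrix.zero_apply]
    norm_num
    rw [hz (j:ℕ) (by omega), hz ((j:ℕ)+2) (by omega)]
    ring
  · simp only [Mmat, Matrix.of_apply, if_neg hi, Matrix.zero_apply]
    rw [hz ((j:ℕ)+1) (by omega)]
    ring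

lemma rank_one_of_coeffs (n : ℕ) (v : ℕ → ℝ) (a b c s : ℝ) (h1 : s^2 + c^2 = 1)
    (hab : ¬(a = 0 ∧ b = 0))
    (hv : ∀ h ≤ n+3, v h = a*(s^h*c^(n+3-h)) + b*(c^h*(-s)^(n+3-h))) :
    Matrix.rank (Mmat (n+3) v) = 1 := by
  have hfac := Mmat_factor n v a b c s hv
  have hle : Matrix.rank (Mmat (n+3) v) ≤ 1 :=
    rank_le_one_of_factor (n+3) (fun i => if i = 0 then c^2 - s^2 else 2*(s*c))
      (fun j => a*s^(j:ℕ)*c^(n+1-(j:ℕ)) - b*c^(j:ℕ)*(-s)^(n+1-(j:ℕ))) hfac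
  have hne : Mmat (n+3) v ≠ 0 := by
    intro h0
    have hz := vzero_of_Mzero n v h0
    have haz : a = 0 := by
      rw [a_eval (n+3) (by omega) v a b c s h1 hv]
      apply Finset.sum_eq_zero
      intro h hh
      rw [hz h (Nat.lt_succ_iff.mp (Finset.mem_range.mp hh))]
      ring
    have hbz : b = 0 := by
      rw [b_eval (n+3) (by omega) v a b c s h1 hv]
      apply Finset.sum_eq_zero
      intro h hh
      rw [hz h (Nat.lt_succ_iff.mp (Finset.mem_range.mp hh))]
      ring
    exact hab ⟨haz, hbz⟩
  refine le_antisymm hle (Nat.one_le_iff_ne_zero.2 ?_)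
  intro hr0
  exact hne (rank_eq_zero_of (n+3) v hr0)

lemma exists_angle (α β : ℝ) (hne : ¬(α = 0 ∧ β = 0)) :
    ∃ ψ ∈ Set.Ico (0:ℝ) (2*Real.pi), ∃ r : ℝ, 0 < r ∧
      α = -r * Real.sin (2*ψ) ∧ β = r * Real.cos (2*ψ) := by
  set z : ℂ := ⟨β, -α⟩ with hzdef
  have hz : z ≠ 0 := by
    intro h
    rw [Complex.ext_iff] at h
    simp [hzdef] at h
    exact hne ⟨h.2, h.1⟩
  have hb1 : -Real.pi < Complex.arg z := Complex.neg_pi_lt_arg z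
  have hb2 : Complex.arg z ≤ Real.pi := Complex.arg_le_pi z
  have hrpos : 0 < ‖z‖ := norm_pos_iff.mpr hz
  have hcos : Real.cos (Complex.arg z) = β / ‖z‖ := by
    rw [Complex.cos_arg hz]
  have hsin : Real.sin (Complex.arg z) = -α / ‖z‖ := by
    rw [Complex.sin_arg]
  have hpi := Real.pi_pos
  refine ⟨if Complex.arg z / 2 < 0 then Complex.arg z / 2 + Real.pi else Complex.arg z / 2,
    ?_, ‖z‖, hrpos, ?_, ?_⟩
  · split_ifs with hlt
    · constructor <;> [linarith; linarith]
    · push_neg at hlt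
      constructor <;> [linarith; linarith]
  · split_ifs with hlt
    · rw [show 2*(Complex.arg z / 2 + Real.pi) = Complex.arg z + 2*Real.pi by ring,
        Real.sin_add_two_pi, hsin]
      field_simp
    · rw [show 2*(Complex.arg z / 2) = Complex.arg z by ring, hsin]
      field_simp
  · split_ifs with hlt
    · rw [show 2*(Complex.arg z / 2 + Real.pi) = Complex.arg z + 2*Real.pi by ring,
        Real.cos_add_two_pi, hcos]
      field_simp
    · rw [show 2*(Complex.arg z / 2) = Complex.arg z by ring, hcos]
      field_simp

lemma coeffs_of_rank_one (n : ℕ) (v : ℕ → ℝ) (hr : Matrix.rank (Mmat (n+3) v) = 1) :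
    ∃ ψ ∈ Set.Ico (0:ℝ) (2*Real.pi), ∃ a b : ℝ, ¬(a = 0 ∧ b = 0) ∧
      ∀ h ≤ n+3, v h = a*((Real.sin ψ)^h*(Real.cos ψ)^(n+3-h))
        + b*((Real.cos ψ)^h*(-Real.sin ψ)^(n+3-h)) := by
  have hne : Mmat (n+3) v ≠ 0 := by
    intro h0
    rw [h0, Matrix.rank_zero] at hr
    exact one_ne_zero hr.symm
  have hnli : ¬ LinearIndependent ℝ (Mmat (n+3) v) := by
    intro h
    have h2 := LinearIndependent.rank_matrix (M := Mmat (n+3) v) h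
    rw [hr] at h2
    simp at h2
  obtain ⟨α, β, hcomb, hne'⟩ : ∃ α β : ℝ,
      α • Mmat (n+3) v 0 + β • Mmat (n+3) v 1 = 0 ∧ ¬(α = 0 ∧ β = 0) := by
    by_contra hcon
    push_neg at hcon
    apply hnli
    have heq : ![Mmat (n+3) v 0, Mmat (n+3) v 1] = Mmat (n+3) v := by
      funext i; fin_cases i <;> rfl
    rw [← heq, LinearIndependent.pair_iff]
    exact fun s t hst => hcon s t hst
  have hrel : ∀ j : ℕ, j ≤ n+1 → α * (v j - v (j+2)) + β * (2 * v (j+1)) = 0 := by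
    intro j hj
    have := congrFun hcomb ⟨j, by omega⟩
    simp only [Pi.add_apply, Pi.smul_apply, smul_eq_mul, Pi.zero_apply] at this
    simpa [Mmat] using this
  by_cases hmid : ∀ h, 1 ≤ h → h ≤ n+2 → v h = 0
  · refine ⟨0, ⟨le_refl 0, by positivity⟩, v 0, v (n+3), ?_, ?_⟩
    · rintro ⟨h0, hd⟩
      apply hne
      apply Mzero_of_vzero
      intro h hh
      rcases Nat.eq_zero_or_pos h with rfl | hpos
      · exact h0
      · by_cases htop : h ≤ n+2
        · exact hmid h hpos htop
        · have : h = n+3 := by omega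
          subst this; exact hd
    · intro h hh
      rw [Real.sin_zero, Real.cos_zero]
      rcases Nat.eq_zero_or_pos h with rfl | hpos
      · rw [pow_zero, pow_zero, one_pow, neg_zero, zero_pow (by omega : n+3-0 ≠ 0)]
        ring
      · by_cases htop : h ≤ n+2
        · rw [hmid h hpos htop, zero_pow (by omega : h ≠ 0), neg_zero,
            zero_pow (by omega : n+3-h ≠ 0)]
          ring
        · have : h = n+3 := by omega
          subst this
          rw [zero_pow (by omega : n+3 ≠ 0), Nat.sub_self, pow_zero, one_pow, pow_zero]
          ring
  · push_neg at hmid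
    obtain ⟨h₀, hh1, hh2, hvne⟩ := hmid
    have hα : α ≠ 0 := by
      rintro rfl
      have hβ : β ≠ 0 := fun hb => hne' ⟨rfl, hb⟩
      apply hvne
      have := hrel (h₀ - 1) (by omega)
      rw [show h₀ - 1 + 1 = h₀ by omega] at this
      have : β * (2 * v h₀) = 0 := by linarith
      rcases mul_eq_zero.mp this with h | h
      · exact absurd h hβ
      · linarith
    obtain ⟨ψ, hψI, r, hr0, hα_eq, hβ_eq⟩ := exists_angle α β hne'
    have h1 : (Real.sin ψ)^2 + (Real.cos ψ)^2 = 1 := Real.sin_sq_add_cos_sq ψ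
    have hcs2 : Real.cos (2*ψ) = (Real.cos ψ)^2 - (Real.sin ψ)^2 := by
      have := Real.cos_two_mul ψ
      linarith
    have hsn2 : Real.sin (2*ψ) = 2*(Real.sin ψ * Real.cos ψ) := by
      rw [Real.sin_two_mul]; ring
    have hs : Real.sin ψ ≠ 0 := by
      intro h0; apply hα; rw [hα_eq, hsn2, h0]; ring
    have hc : Real.cos ψ ≠ 0 := by
      intro h0; apply hα; rw [hα_eq, hsn2, h0]; ring
    have hrec : ∀ j, j ≤ n+1 → Real.sin ψ * Real.cos ψ * (v (j+2))
        + ((Real.cos ψ)^2 - (Real.sin ψ)^2) * (v (j+1))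
        - Real.sin ψ * Real.cos ψ * (v j) = 0 := by
      intro j hj
      have hj' := hrel j hj
      rw [hα_eq, hβ_eq, hsn2, hcs2] at hj'
      have key : (2*r) * (Real.sin ψ * Real.cos ψ * (v (j+2))
          + ((Real.cos ψ)^2 - (Real.sin ψ)^2) * (v (j+1))
          - Real.sin ψ * Real.cos ψ * (v j)) = 0 := by linear_combination hj'
      rcases mul_eq_zero.mp key with h | h
      · exact absurd h (by positivity)
      · exact h
    obtain ⟨a, b, hform⟩ := solve n v (Real.cos ψ) (Real.sin ψ) hs hc h1 hrec
    have hab : ¬(a = 0 ∧ b = 0) := by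
      rintro ⟨rfl, rfl⟩
      apply hvne
      rw [hform h₀ (by omega)]
      ring
    exact ⟨ψ, hψI, a, b, hab, hform⟩


/-- A `δ`-PHO is separable within a rotation of Cartesian coordinates
iff `rank M(K) = 1`. -/
theorem statement5 (δ : ℕ) (hδ : 3 ≤ δ) (v : ℕ → ℝ) :
    SepRot δ v ↔ Matrix.rank (Mmat δ v) = 1 := by
  obtain ⟨n, rfl⟩ : ∃ n, δ = n + 3 := ⟨δ - 3, by omega⟩
  constructor
  · rintro ⟨ψ, hψ, hsep⟩
    obtain ⟨a, b, hab, hv⟩ := (sepAt_iff (n+3) v ψ).mp hsep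
    exact rank_one_of_coeffs n v a b (Real.cos ψ) (Real.sin ψ)
      (Real.sin_sq_add_cos_sq ψ) hab hv
  · intro hr
    obtain ⟨ψ, hψI, a, b, hab, hform⟩ := coeffs_of_rank_one n v hr
    exact ⟨ψ, hψI, (sepAt_iff (n+3) v ψ).mpr ⟨a, b, hab, hform⟩⟩

end
end

section
/- Let δ ≥ 4 be an even integer and let K be the δ-PHO Hamiltonian with coefficients v_0, …, v_δ. Suppose a formal power series W normalizes K into a formal power series G that is in BGNF up to degree 2δ−2. Then the homogeneous parts of G satisfy G_k = 0 for every k with 3 ≤ k ≤ δ−1 and every k with δ+1 ≤ k ≤ 2δ−3, and, after the complex substitution ζ_j = ξ_j + i·η_j (j = 1,2, with ζ̄_j = ξ_j − i·η_j), the degree-δ homogeneous part of G equals G_δ = 2^{−δ}·Σ_{h=0}^{δ} C(δ,h)·v_h·Σ_{m=max(0,h−δ/2)}^{min(h,δ/2)} C(h,m)·C(δ−h, δ/2−m)·ζ_1^m·ζ_2^{δ/2−m}·ζ̄_1^{h−m}·ζ̄_2^{δ−h−δ/2+m} (the kernel component of V with respect to D). -/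
open MvPolynomial Finset

noncomputable section

/-- formal power series in four variables over `ℂ` -/
abbrev PSC := MvPowerSeries (Fin 4) ℂ

/-- `ζ₁ = ξ₁ + i η₁` -/
def Z1 : PSC := MvPowerSeries.X 0 + MvPowerSeries.C (σ := Fin 4) (R := ℂ) Complex.I * MvPowerSeries.X 2
/-- `ζ₂ = ξ₂ + i η₂` -/
def Z2 : PSC := MvPowerSeries.X 1 + MvPowerSeries.C (σ := Fin 4) (R := ℂ) Complex.I * MvPowerSeries.X 3
/-- `ζ̄₁ = ξ₁ - i η₁` -/
def Zb1 : PSC := MvPowerSeries.X 0 - MvPowerSeries.C (σ := Fin 4) (R := ℂ) Complex.I * MvPowerSeries.X 2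
/-- `ζ̄₂ = ξ₂ - i η₂` -/
def Zb2 : PSC := MvPowerSeries.X 1 - MvPowerSeries.C (σ := Fin 4) (R := ℂ) Complex.I * MvPowerSeries.X 3

/-- the canonical map from real to complex formal power series -/
def mapC : PS →+* PSC := MvPowerSeries.map (σ := Fin 4) Complex.ofRealHom


namespace S10

variable {R : Type*} [CommRing R]

abbrev MS (R : Type*) [CommRing R] := MvPowerSeries (Fin 4) R

def e (i : Fin 4) : Fin 4 →₀ ℕ := Finsupp.single i 1

def pd (i : Fin 4) (f : MS R) : MS R := fun d => ((d i : R) + 1) * f (d + e i)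

def D (f : MS R) : MS R :=
  MvPowerSeries.X 0 * pd 2 f + MvPowerSeries.X 1 * pd 3 f
    - MvPowerSeries.X 2 * pd 0 f - MvPowerSeries.X 3 * pd 1 f

lemma pd_eq_pdPS (i : Fin 4) (f : PS) : pd i f = pdPS i f := rfl

lemma D_eq_Dop (f : PS) : D f = Dop f := rfl

lemma degOf_add (a b : Fin 4 →₀ ℕ) : degOf (a + b) = degOf a + degOf b := by
  classical
  exact Finsupp.sum_add_index (by simp) (by simp)

lemma degOf_single (i : Fin 4) (n : ℕ) : degOf (Finsupp.single i n) = n := by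
  classical
  simp [degOf, Finsupp.sum_single_index]

lemma degOf_e (i : Fin 4) : degOf (e i) = 1 := degOf_single i 1

lemma degOf_zero : degOf (0 : Fin 4 →₀ ℕ) = 0 := by simp [degOf]

lemma degOf_eq_sum (d : Fin 4 →₀ ℕ) : degOf d = ∑ i : Fin 4, d i := by
  classical
  rw [degOf, Finsupp.sum_fintype]
  simp

lemma degOf_eq_zero {d : Fin 4 →₀ ℕ} (h : degOf d = 0) : d = 0 := by
  classical
  rw [degOf_eq_sum] at h
  ext i
  have := Finset.sum_eq_zero_iff.mp h i (by simp)
  simpa using this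

lemma degOf_mono {a b : Fin 4 →₀ ℕ} (h : a ≤ b) : degOf a ≤ degOf b := by
  rw [degOf_eq_sum, degOf_eq_sum]
  exact Finset.sum_le_sum fun i _ => h i

lemma degOf_tsub {a b : Fin 4 →₀ ℕ} (h : b ≤ a) : degOf (a - b) = degOf a - degOf b := by
  have : a - b + b = a := tsub_add_cancel_of_le h
  have h2 : degOf (a - b) + degOf b = degOf a := by rw [← degOf_add, this]
  omega

/-- coefficient of a product -/
lemma coeff_mul (f g : MS R) (d : Fin 4 →₀ ℕ) :
    (f * g : MS R) d = ∑ p ∈ Finset.HasAntidiagonal.antidiagonal d, f p.1 * g p.2 := by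
  classical
  exact MvPowerSeries.coeff_mul d f g

lemma mul_coeff_eq_zero {f g : MS R} {n m : ℕ}
    (hf : ∀ u, degOf u < n → f u = 0) (hg : ∀ u, degOf u < m → g u = 0)
    {d : Fin 4 →₀ ℕ} (hd : degOf d < n + m) : (f * g) d = 0 := by
  classical
  rw [coeff_mul]
  refine Finset.sum_eq_zero fun p hp => ?_
  rw [Finset.HasAntidiagonal.mem_antidiagonal] at hp
  have hdeg : degOf p.1 + degOf p.2 = degOf d := by rw [← degOf_add, hp]
  by_cases h1 : degOf p.1 < n
  · rw [hf _ h1, zero_mul]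
  · have : degOf p.2 < m := by omega
    rw [hg _ this, mul_zero]

lemma coeff_monomial_mul (m n : Fin 4 →₀ ℕ) (a : R) (f : MS R) :
    (MvPowerSeries.monomial n a * f : MS R) m = if n ≤ m then a * f (m - n) else 0 :=
  MvPowerSeries.coeff_monomial_mul (m := m) (n := n) (φ := f) a

lemma coeff_X_mul (i : Fin 4) (f : MS R) (d : Fin 4 →₀ ℕ) :
    (MvPowerSeries.X i * f : MS R) d = if e i ≤ d then f (d - e i) else 0 := by
  rw [MvPowerSeries.X_def]
  exact coeff_monomial_mul d (e i) 1 f |>.trans (by split <;> simp)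

lemma coeff_X (i : Fin 4) (d : Fin 4 →₀ ℕ) :
    (MvPowerSeries.X i : MS R) d = if d = e i then 1 else 0 := by
  classical
  rw [MvPowerSeries.X_def]
  exact MvPowerSeries.coeff_monomial d (e i) 1

lemma coeff_C_mul (a : R) (f : MS R) (d : Fin 4 →₀ ℕ) :
    ((MvPowerSeries.C (σ := Fin 4) (R := R) a) * f : MS R) d = a * f d :=
  MvPowerSeries.coeff_C_mul d f a

lemma coeff_one (d : Fin 4 →₀ ℕ) :
    ((1 : MS R)) d = if d = 0 then 1 else 0 := by
  classical
  exact MvPowerSeries.coeff_one d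

lemma coeff_monomial (m n : Fin 4 →₀ ℕ) (a : R) :
    (MvPowerSeries.monomial n a : MS R) m = if m = n then a else 0 := by
  classical
  exact MvPowerSeries.coeff_monomial m n a

/-- homogeneity predicate -/
def Homog (f : MS R) (k : ℕ) : Prop := ∀ d, degOf d ≠ k → f d = 0

lemma Homog.mul {f g : MS R} {p q : ℕ} (hf : Homog f p) (hg : Homog g q) :
    Homog (f * g) (p + q) := by
  classical
  intro d hd
  rw [coeff_mul]
  refine Finset.sum_eq_zero fun x hx => ?_
  rw [Finset.HasAntidiagonal.mem_antidiagonal] at hx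
  have hdeg : degOf x.1 + degOf x.2 = degOf d := by rw [← degOf_add, hx]
  by_cases h1 : degOf x.1 = p
  · have : degOf x.2 ≠ q := fun h => hd (by omega)
    rw [hg _ this, mul_zero]
  · rw [hf _ h1, zero_mul]

lemma Homog.pow {f : MS R} {p : ℕ} (hf : Homog f p) (n : ℕ) : Homog (f ^ n) (n * p) := by
  induction n with
  | zero =>
    intro d hd
    rw [pow_zero, coeff_one]
    have : d ≠ 0 := fun h => hd (by simp [h, degOf_zero])
    simp [this]
  | succ n ih =>
    have harith : (n + 1) * p = n * p + p := by ring
    rw [pow_succ, harith]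
    exact ih.mul hf

lemma Homog.add {f g : MS R} {p : ℕ} (hf : Homog f p) (hg : Homog g p) : Homog (f + g) p :=
  fun d hd => by
    have : (f + g) d = f d + g d := rfl
    rw [this, hf d hd, hg d hd, add_zero]

lemma Homog.sub {f g : MS R} {p : ℕ} (hf : Homog f p) (hg : Homog g p) : Homog (f - g) p :=
  fun d hd => by
    have : (f - g) d = f d - g d := rfl
    rw [this, hf d hd, hg d hd, sub_zero]

lemma Homog.C_mul {f : MS R} {p : ℕ} (a : R) (hf : Homog f p) :
    Homog ((MvPowerSeries.C (σ := Fin 4) (R := R) a) * f) p :=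
  fun d hd => by rw [coeff_C_mul, hf d hd, mul_zero]

lemma Homog.smul {f : MS R} {p : ℕ} (a : R) (hf : Homog f p) : Homog (a • f) p :=
  fun d hd => by
    have : (a • f) d = a * f d := rfl
    rw [this, hf d hd, mul_zero]

lemma Homog.zero {p : ℕ} : Homog (0 : MS R) p := fun _ _ => rfl

lemma Homog.sum {ι : Type*} (s : Finset ι) (f : ι → MS R) {p : ℕ}
    (h : ∀ i ∈ s, Homog (f i) p) : Homog (∑ i ∈ s, f i) p := by
  classical
  induction s using Finset.induction_on with
  | empty => rw [Finset.sum_empty]; exact Homog.zero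
  | @insert a s' hx ih =>
    rw [Finset.sum_insert hx]
    exact (h a (by simp)).add (ih fun i hi => h i (Finset.mem_insert_of_mem hi))

lemma Homog.X (i : Fin 4) : Homog (MvPowerSeries.X i : MS R) 1 := by
  intro d hd
  rw [coeff_X]
  have : d ≠ e i := fun h => hd (by rw [h, degOf_e])
  simp [this]

end S10
section part2
variable {R : Type*} [CommRing R]
open S10 MvPowerSeries

namespace S10

lemma coeff_add (f g : MS R) (d : Fin 4 →₀ ℕ) : (f + g : MS R) d = f d + g d := rfl
lemma coeff_sub (f g : MS R) (d : Fin 4 →₀ ℕ) : (f - g : MS R) d = f d - g d := rfl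
lemma coeff_neg (f : MS R) (d : Fin 4 →₀ ℕ) : (-f : MS R) d = -(f d) := rfl
lemma coeff_smul (a : R) (f : MS R) (d : Fin 4 →₀ ℕ) : (a • f : MS R) d = a * f d := rfl
lemma coeff_zero (d : Fin 4 →₀ ℕ) : (0 : MS R) d = 0 := rfl
lemma coeff_sum {ι : Type*} (s : Finset ι) (f : ι → MS R) (d : Fin 4 →₀ ℕ) :
    (∑ i ∈ s, f i : MS R) d = ∑ i ∈ s, f i d := by
  classical
  induction s using Finset.induction_on with
  | empty => simp [coeff_zero]
  | @insert a s' hx ih => rw [Finset.sum_insert hx, Finset.sum_insert hx, coeff_add, ih]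

lemma pd_coeff (i : Fin 4) (f : MS R) (d : Fin 4 →₀ ℕ) :
    pd i f d = ((d i : R) + 1) * f (d + e i) := rfl

lemma pd_add (i : Fin 4) (f g : MS R) : pd i (f + g) = pd i f + pd i g := by
  funext d
  rw [coeff_add, pd_coeff, pd_coeff, pd_coeff, coeff_add]
  ring

lemma pd_sub (i : Fin 4) (f g : MS R) : pd i (f - g) = pd i f - pd i g := by
  funext d
  rw [coeff_sub, pd_coeff, pd_coeff, pd_coeff, coeff_sub]
  ring

lemma pd_smul (i : Fin 4) (a : R) (f : MS R) : pd i (a • f) = a • pd i f := by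
  funext d
  rw [coeff_smul, pd_coeff, pd_coeff, coeff_smul]
  ring

lemma pd_zero (i : Fin 4) : pd i (0 : MS R) = 0 := by
  funext d
  rw [pd_coeff, coeff_zero, coeff_zero, mul_zero]

lemma pd_sum {ι : Type*} (i : Fin 4) (s : Finset ι) (f : ι → MS R) :
    pd i (∑ j ∈ s, f j) = ∑ j ∈ s, pd i (f j) := by
  classical
  induction s using Finset.induction_on with
  | empty => simpa using pd_zero (R := R) i
  | @insert a s' hx ih =>
    rw [Finset.sum_insert hx, Finset.sum_insert hx, pd_add, ih]

lemma pd_C_mul (i : Fin 4) (a : R) (f : MS R) :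
    pd i (MvPowerSeries.C (σ := Fin 4) (R := R) a * f) = MvPowerSeries.C (σ := Fin 4) (R := R) a * pd i f := by
  funext d
  rw [pd_coeff, coeff_C_mul, coeff_C_mul, pd_coeff]
  ring

/-- the key reindexing step for the Leibniz rule -/
lemma pd_reindex (i : Fin 4) (f g : MS R) (d : Fin 4 →₀ ℕ) :
    ∑ p ∈ Finset.HasAntidiagonal.antidiagonal (d + e i), ((p.1 i : R)) * f p.1 * g p.2
      = ∑ p ∈ Finset.HasAntidiagonal.antidiagonal d, ((p.1 i : R) + 1) * f (p.1 + e i) * g p.2 := by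
  classical
  rw [← Finset.sum_filter_of_ne
    (p := fun p : (Fin 4 →₀ ℕ) × (Fin 4 →₀ ℕ) => p.1 i ≠ 0)
    (f := fun p : (Fin 4 →₀ ℕ) × (Fin 4 →₀ ℕ) => ((p.1 i : R)) * f p.1 * g p.2)
    (fun x _ hx h0 => hx (by simp [h0]))]
  refine (Finset.sum_bij' (i := fun (q : (Fin 4 →₀ ℕ) × (Fin 4 →₀ ℕ)) (_ : q ∈ Finset.HasAntidiagonal.antidiagonal d) => (q.1 + e i, q.2))
    (j := fun (p : (Fin 4 →₀ ℕ) × (Fin 4 →₀ ℕ)) (_ : p ∈ (Finset.HasAntidiagonal.antidiagonal (d + e i)).filter (fun p => p.1 i ≠ 0)) => (p.1 - e i, p.2)) ?_ ?_ ?_ ?_ ?_).symm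
  · intro q hq
    rw [Finset.HasAntidiagonal.mem_antidiagonal] at hq
    simp only [Finset.mem_filter, Finset.HasAntidiagonal.mem_antidiagonal]
    refine ⟨by rw [add_right_comm, hq], ?_⟩
    simp [e]
  · intro p hp
    simp only [Finset.mem_filter, Finset.HasAntidiagonal.mem_antidiagonal] at hp
    rw [Finset.HasAntidiagonal.mem_antidiagonal]
    have hle : e i ≤ p.1 := by
      rw [e, Finsupp.single_le_iff]
      omega
    calc p.1 - e i + p.2 = p.1 + p.2 - e i := by rw [tsub_add_eq_add_tsub hle]
      _ = d := by rw [hp.1, add_tsub_cancel_right]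
  · intro q _
    simp only
    rw [add_tsub_cancel_right]
  · intro p hp
    simp only [Finset.mem_filter, Finset.HasAntidiagonal.mem_antidiagonal] at hp
    have hle : e i ≤ p.1 := by
      rw [e, Finsupp.single_le_iff]
      omega
    simp only
    rw [tsub_add_cancel_of_le hle]
  · intro q _
    simp only
    have h2 : (q.1 + e i) i = q.1 i + 1 := by simp [e]
    rw [h2]
    push_cast
    ring

/-- mirror version for the second component -/
lemma pd_reindex₂ (i : Fin 4) (f g : MS R) (d : Fin 4 →₀ ℕ) :
    ∑ p ∈ Finset.HasAntidiagonal.antidiagonal (d + e i), ((p.2 i : R)) * f p.1 * g p.2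
      = ∑ p ∈ Finset.HasAntidiagonal.antidiagonal d, ((p.2 i : R) + 1) * f p.1 * g (p.2 + e i) := by
  classical
  rw [← Finset.sum_filter_of_ne
    (p := fun p : (Fin 4 →₀ ℕ) × (Fin 4 →₀ ℕ) => p.2 i ≠ 0)
    (f := fun p : (Fin 4 →₀ ℕ) × (Fin 4 →₀ ℕ) => ((p.2 i : R)) * f p.1 * g p.2)
    (fun x _ hx h0 => hx (by simp [h0]))]
  refine (Finset.sum_bij' (i := fun (q : (Fin 4 →₀ ℕ) × (Fin 4 →₀ ℕ)) (_ : q ∈ Finset.HasAntidiagonal.antidiagonal d) => (q.1, q.2 + e i))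
    (j := fun (p : (Fin 4 →₀ ℕ) × (Fin 4 →₀ ℕ)) (_ : p ∈ (Finset.HasAntidiagonal.antidiagonal (d + e i)).filter (fun p => p.2 i ≠ 0)) => (p.1, p.2 - e i)) ?_ ?_ ?_ ?_ ?_).symm
  · intro q hq
    rw [Finset.HasAntidiagonal.mem_antidiagonal] at hq
    simp only [Finset.mem_filter, Finset.HasAntidiagonal.mem_antidiagonal]
    refine ⟨by rw [← add_assoc, hq], ?_⟩
    simp [e]
  · intro p hp
    simp only [Finset.mem_filter, Finset.HasAntidiagonal.mem_antidiagonal] at hp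
    rw [Finset.HasAntidiagonal.mem_antidiagonal]
    have hle : e i ≤ p.2 := by
      rw [e, Finsupp.single_le_iff]
      omega
    calc p.1 + (p.2 - e i) = p.1 + p.2 - e i := (add_tsub_assoc_of_le hle p.1).symm
      _ = d := by rw [hp.1, add_tsub_cancel_right]
  · intro q _
    simp only
    rw [add_tsub_cancel_right]
  · intro p hp
    simp only [Finset.mem_filter, Finset.HasAntidiagonal.mem_antidiagonal] at hp
    have hle : e i ≤ p.2 := by
      rw [e, Finsupp.single_le_iff]
      omega
    simp only
    rw [tsub_add_cancel_of_le hle]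
  · intro q _
    simp only
    have h2 : (q.2 + e i) i = q.2 i + 1 := by simp [e]
    rw [h2]
    push_cast
    ring

/-- Leibniz rule -/
lemma pd_mul (i : Fin 4) (f g : MS R) :
    pd i (f * g) = pd i f * g + f * pd i g := by
  classical
  funext d
  rw [coeff_add, pd_coeff, coeff_mul, coeff_mul (pd i f) g, coeff_mul f (pd i g),
    Finset.mul_sum]
  have key : ∀ p ∈ Finset.HasAntidiagonal.antidiagonal (d + e i),
      ((d i : R) + 1) * (f p.1 * g p.2)
        = (p.1 i : R) * f p.1 * g p.2 + (p.2 i : R) * f p.1 * g p.2 := by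
    intro p hp
    rw [Finset.HasAntidiagonal.mem_antidiagonal] at hp
    have hnat : p.1 i + p.2 i = d i + 1 := by
      have := DFunLike.congr_fun hp i
      simpa [e, Finsupp.single_apply] using this
    have hcast : (d i : R) + 1 = (p.1 i : R) + (p.2 i : R) := by
      rw [← Nat.cast_one, ← Nat.cast_add, ← hnat, Nat.cast_add]
    rw [hcast]
    ring
  rw [Finset.sum_congr rfl key, Finset.sum_add_distrib]
  congr 1
  · rw [pd_reindex]
    exact Finset.sum_congr rfl fun p _ => by rw [pd_coeff]; try ring
  · rw [pd_reindex₂]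
    exact Finset.sum_congr rfl fun p _ => by rw [pd_coeff]; try ring

lemma pd_one (i : Fin 4) : pd i (1 : MS R) = 0 := by
  funext d
  rw [pd_coeff, coeff_one, coeff_zero]
  have : d + e i ≠ 0 := by
    intro h
    have := DFunLike.congr_fun h i
    simp [e] at this
  simp [this]

lemma pd_X (i j : Fin 4) :
    pd i (MvPowerSeries.X j : MS R) = if i = j then 1 else 0 := by
  by_cases h : i = j
  · subst h
    rw [if_pos rfl]
    funext d
    rw [pd_coeff, coeff_X, coeff_one]
    by_cases hd : d = 0
    · subst hd; simp
    · have h1 : ¬(d + e i = e i) := fun hh => hd (by rwa [add_eq_right] at hh)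
      simp [h1, hd]
  · rw [if_neg h]
    funext d
    rw [pd_coeff, coeff_X, coeff_zero]
    have h1 : d + e i ≠ e j := by
      intro hh
      have h2 := DFunLike.congr_fun hh i
      have hji : ¬(j = i) := fun h' => h h'.symm
      rw [e, e, Finsupp.add_apply, Finsupp.single_eq_same, Finsupp.single_eq_of_ne (Ne.symm hji)] at h2
      omega
    simp [h1]

/-- D is a derivation -/
lemma D_mul (f g : MS R) : D (f * g) = D f * g + f * D g := by
  rw [D, D, D, pd_mul, pd_mul, pd_mul, pd_mul]
  ring

lemma D_add (f g : MS R) : D (f + g) = D f + D g := by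
  rw [D, D, D, pd_add, pd_add, pd_add, pd_add]
  ring

lemma D_sub (f g : MS R) : D (f - g) = D f - D g := by
  rw [D, D, D, pd_sub, pd_sub, pd_sub, pd_sub]
  ring

lemma D_smul (a : R) (f : MS R) : D (a • f) = a • D f := by
  rw [D, D, pd_smul, pd_smul, pd_smul, pd_smul, smul_sub, smul_sub, smul_add,
    mul_smul_comm, mul_smul_comm, mul_smul_comm, mul_smul_comm]

lemma D_zero : D (0 : MS R) = 0 := by
  have := D_smul (0 : R) (0 : MS R)
  simpa using this

lemma D_sum {ι : Type*} (s : Finset ι) (f : ι → MS R) :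
    D (∑ i ∈ s, f i) = ∑ i ∈ s, D (f i) := by
  classical
  induction s using Finset.induction_on with
  | empty => simpa using D_zero (R := R)
  | @insert a s' hx ih =>
    rw [Finset.sum_insert hx, Finset.sum_insert hx, D_add, ih]

lemma D_C_mul (a : R) (f : MS R) :
    D (MvPowerSeries.C (σ := Fin 4) (R := R) a * f) = MvPowerSeries.C (σ := Fin 4) (R := R) a * D f := by
  rw [D, D, pd_C_mul, pd_C_mul, pd_C_mul, pd_C_mul]
  ring

lemma D_one : D (1 : MS R) = 0 := by
  rw [D, pd_one, pd_one, pd_one, pd_one]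
  ring

lemma D_X0 : D (MvPowerSeries.X 0 : MS R) = -MvPowerSeries.X 2 := by
  rw [D, pd_X, pd_X, pd_X, pd_X, if_neg (by decide), if_neg (by decide),
    if_pos rfl, if_neg (by decide)]
  ring

lemma D_X1 : D (MvPowerSeries.X 1 : MS R) = -MvPowerSeries.X 3 := by
  rw [D, pd_X, pd_X, pd_X, pd_X, if_neg (by decide), if_neg (by decide),
    if_neg (by decide), if_pos rfl]
  ring

lemma D_X2 : D (MvPowerSeries.X 2 : MS R) = MvPowerSeries.X 0 := by
  rw [D, pd_X, pd_X, pd_X, pd_X, if_pos rfl, if_neg (by decide),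
    if_neg (by decide), if_neg (by decide)]
  ring

lemma D_X3 : D (MvPowerSeries.X 3 : MS R) = MvPowerSeries.X 1 := by
  rw [D, pd_X, pd_X, pd_X, pd_X, if_neg (by decide), if_pos rfl,
    if_neg (by decide), if_neg (by decide)]
  ring

/-- eigenvector lemmas -/
lemma D_eigen_mul {f g : MS R} {a b : R} (hf : D f = a • f) (hg : D g = b • g) :
    D (f * g) = (a + b) • (f * g) := by
  rw [D_mul, hf, hg, smul_mul_assoc, mul_smul_comm, add_smul]

lemma D_eigen_pow {f : MS R} {a : R} (hf : D f = a • f) (n : ℕ) :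
    D (f ^ n) = ((n : R) * a) • (f ^ n) := by
  induction n with
  | zero => simpa using D_one
  | succ n ih =>
    rw [pow_succ, D_eigen_mul ih hf]
    congr 1
    push_cast
    ring

end S10
end part2
section part3
open S10 MvPowerSeries

namespace S10

/-- the finite set of exponents of total degree `k` -/
def Sk (k : ℕ) : Finset (Fin 4 →₀ ℕ) :=
  (Finset.Iic (Finsupp.equivFunOnFinite.symm fun _ => k)).filter (fun d => degOf d = k)

lemma apply_le_degOf (d : Fin 4 →₀ ℕ) (i : Fin 4) : d i ≤ degOf d := by
  rw [degOf_eq_sum]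
  exact Finset.single_le_sum (f := fun j => d j) (fun j _ => Nat.zero_le _) (by simp)

lemma mem_Sk {k : ℕ} {d : Fin 4 →₀ ℕ} : d ∈ Sk k ↔ degOf d = k := by
  constructor
  · intro h
    exact (Finset.mem_filter.mp h).2
  · intro h
    refine Finset.mem_filter.mpr ⟨Finset.mem_Iic.mpr ?_, h⟩
    intro i
    have := apply_le_degOf d i
    simp only [Finsupp.coe_equivFunOnFinite_symm]
    omega

/-- the Fischer weight -/
def wt (d : Fin 4 →₀ ℕ) : ℕ := ∏ i : Fin 4, (d i).factorial

lemma wt_pos (d : Fin 4 →₀ ℕ) : 0 < wt d :=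
  Finset.prod_pos fun i _ => Nat.factorial_pos _

lemma fac_pred {n : ℕ} (h : 1 ≤ n) : (n - 1).factorial * n = n.factorial := by
  cases n with
  | zero => omega
  | succ m => rw [Nat.add_sub_cancel, Nat.factorial_succ]; ring

lemma e_apply_same (i : Fin 4) : e i i = 1 := Finsupp.single_eq_same

lemma e_apply_ne {i j : Fin 4} (h : i ≠ j) : e i j = 0 := Finsupp.single_eq_of_ne h.symm

lemma e_le_iff {i : Fin 4} {d : Fin 4 →₀ ℕ} : e i ≤ d ↔ 1 ≤ d i := by
  rw [e, Finsupp.single_le_iff]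

lemma wt_swap {a b : Fin 4} (hab : a ≠ b) {d : Fin 4 →₀ ℕ} (ha : 1 ≤ d a) :
    wt (d - e a + e b) * d a = wt d * (d b + 1) := by
  classical
  set A := d - e a + e b with hA
  have hAa : A a = d a - 1 := by
    rw [hA, Finsupp.add_apply, Finsupp.tsub_apply, e_apply_same, e_apply_ne hab.symm]
    omega
  have hAb : A b = d b + 1 := by
    rw [hA, Finsupp.add_apply, Finsupp.tsub_apply, e_apply_same, e_apply_ne hab]
    omega
  have hAo : ∀ i, i ≠ a → i ≠ b → A i = d i := by
    intro i hia hib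
    rw [hA, Finsupp.add_apply, Finsupp.tsub_apply,
      e_apply_ne (Ne.symm hia), e_apply_ne (Ne.symm hib)]
    omega
  have hbmem : b ∈ Finset.univ.erase a := Finset.mem_erase.mpr ⟨hab.symm, Finset.mem_univ b⟩
  have hwA : wt A = (A a).factorial * ((A b).factorial
      * ∏ i ∈ (Finset.univ.erase a).erase b, (A i).factorial) := by
    rw [wt, ← Finset.mul_prod_erase Finset.univ _ (Finset.mem_univ a),
      ← Finset.mul_prod_erase _ _ hbmem]
  have hwd : wt d = (d a).factorial * ((d b).factorial
      * ∏ i ∈ (Finset.univ.erase a).erase b, (d i).factorial) := by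
    rw [wt, ← Finset.mul_prod_erase Finset.univ _ (Finset.mem_univ a),
      ← Finset.mul_prod_erase _ _ hbmem]
  have hP : ∏ i ∈ (Finset.univ.erase a).erase b, (A i).factorial
      = ∏ i ∈ (Finset.univ.erase a).erase b, (d i).factorial := by
    refine Finset.prod_congr rfl fun i hi => ?_
    rw [Finset.mem_erase, Finset.mem_erase] at hi
    rw [hAo i hi.2.1 hi.1]
  rw [hwA, hwd, hP, hAa, hAb]
  calc (d a - 1).factorial * ((d b + 1).factorial
        * ∏ i ∈ (Finset.univ.erase a).erase b, (d i).factorial) * d a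
      = ((d a - 1).factorial * d a) * ((d b + 1) * (d b).factorial)
        * ∏ i ∈ (Finset.univ.erase a).erase b, (d i).factorial := by
        rw [Nat.factorial_succ]; ring
    _ = (d a).factorial * ((d b).factorial
        * ∏ i ∈ (Finset.univ.erase a).erase b, (d i).factorial) * (d b + 1) := by
        rw [fac_pred ha]; ring

variable {𝕜 : Type*} [RCLike 𝕜]

/-- the Fischer pairing in degree `k` -/
def Bf (k : ℕ) (f g : MS 𝕜) : 𝕜 :=
  ∑ d ∈ Sk k, (wt d : 𝕜) * (f d * (starRingEnd 𝕜) (g d))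

lemma Bf_add_left (k : ℕ) (f₁ f₂ g : MS 𝕜) :
    Bf k (f₁ + f₂) g = Bf k f₁ g + Bf k f₂ g := by
  rw [Bf, Bf, Bf, ← Finset.sum_add_distrib]
  exact Finset.sum_congr rfl fun d _ => by rw [coeff_add]; ring

lemma Bf_sub_left (k : ℕ) (f₁ f₂ g : MS 𝕜) :
    Bf k (f₁ - f₂) g = Bf k f₁ g - Bf k f₂ g := by
  rw [Bf, Bf, Bf, ← Finset.sum_sub_distrib]
  exact Finset.sum_congr rfl fun d _ => by rw [coeff_sub]; ring

lemma Bf_add_right (k : ℕ) (f g₁ g₂ : MS 𝕜) :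
    Bf k f (g₁ + g₂) = Bf k f g₁ + Bf k f g₂ := by
  rw [Bf, Bf, Bf, ← Finset.sum_add_distrib]
  exact Finset.sum_congr rfl fun d _ => by rw [coeff_add, map_add]; ring

lemma Bf_sub_right (k : ℕ) (f g₁ g₂ : MS 𝕜) :
    Bf k f (g₁ - g₂) = Bf k f g₁ - Bf k f g₂ := by
  rw [Bf, Bf, Bf, ← Finset.sum_sub_distrib]
  exact Finset.sum_congr rfl fun d _ => by rw [coeff_sub, map_sub]; ring

lemma Bf_zero_right (k : ℕ) (f : MS 𝕜) : Bf k f 0 = 0 := by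
  rw [Bf]
  refine Finset.sum_eq_zero fun d _ => by rw [coeff_zero]; simp

/-- skew-adjointness building block -/
lemma Bf_block {a b : Fin 4} (hab : a ≠ b) (k : ℕ) (f g : MS 𝕜) :
    Bf k (MvPowerSeries.X a * pd b f) g = Bf k f (MvPowerSeries.X b * pd a g) := by
  classical
  rw [Bf, Bf]
  rw [← Finset.sum_filter_of_ne (p := fun d : Fin 4 →₀ ℕ => d a ≠ 0)
    (f := fun d => (wt d : 𝕜) * ((MvPowerSeries.X a * pd b f : MS 𝕜) d * (starRingEnd 𝕜) (g d)))
    (fun d _ hd => by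
      intro h0
      by_contra hcon
      push_neg at hcon
      apply hd
      have hne : ¬ (e a ≤ d) := by rw [e_le_iff]; omega
      simp [coeff_X_mul, hne])]
  rw [← Finset.sum_filter_of_ne (p := fun d : Fin 4 →₀ ℕ => d b ≠ 0)
    (f := fun d => (wt d : 𝕜) * (f d * (starRingEnd 𝕜) ((MvPowerSeries.X b * pd a g : MS 𝕜) d)))
    (fun d _ hd => by
      intro h0
      by_contra hcon
      push_neg at hcon
      apply hd
      have hne : ¬ (e b ≤ d) := by rw [e_le_iff]; omega
      simp [coeff_X_mul, hne])]
  refine Finset.sum_bij' (i := fun (d : Fin 4 →₀ ℕ)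
      (_ : d ∈ (Sk k).filter (fun d => d a ≠ 0)) => d - e a + e b)
    (j := fun (A : Fin 4 →₀ ℕ) (_ : A ∈ (Sk k).filter (fun d => d b ≠ 0)) => A - e b + e a)
    ?_ ?_ ?_ ?_ ?_
  · intro d hd
    rw [Finset.mem_filter, mem_Sk] at hd
    obtain ⟨hd1, hd2⟩ := hd
    have hle : e a ≤ d := by rw [e_le_iff]; omega
    rw [Finset.mem_filter, mem_Sk]
    constructor
    · rw [degOf_add, degOf_tsub hle, degOf_e, degOf_e]
      have h2 := apply_le_degOf d a
      omega
    · rw [Finsupp.add_apply, e_apply_same]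
      omega
  · intro A hA
    rw [Finset.mem_filter, mem_Sk] at hA
    obtain ⟨hA1, hA2⟩ := hA
    have hle : e b ≤ A := by rw [e_le_iff]; omega
    rw [Finset.mem_filter, mem_Sk]
    constructor
    · rw [degOf_add, degOf_tsub hle, degOf_e, degOf_e]
      have h2 := apply_le_degOf A b
      omega
    · rw [Finsupp.add_apply, e_apply_same]
      omega
  · intro d hd
    rw [Finset.mem_filter, mem_Sk] at hd
    have hle : e a ≤ d := by rw [e_le_iff]; omega
    show d - e a + e b - e b + e a = d
    rw [add_tsub_cancel_right, tsub_add_cancel_of_le hle]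
  · intro A hA
    rw [Finset.mem_filter, mem_Sk] at hA
    have hle : e b ≤ A := by rw [e_le_iff]; omega
    show A - e b + e a - e a + e b = A
    rw [add_tsub_cancel_right, tsub_add_cancel_of_le hle]
  · intro d hd'
    rw [Finset.mem_filter, mem_Sk] at hd'
    obtain ⟨hd1, hd2⟩ := hd'
    have hle : e a ≤ d := by rw [e_le_iff]; omega
    show (wt d : 𝕜) * ((MvPowerSeries.X a * pd b f : MS 𝕜) d * (starRingEnd 𝕜) (g d))
      = (wt (d - e a + e b) : 𝕜) * (f (d - e a + e b)
          * (starRingEnd 𝕜) ((MvPowerSeries.X b * pd a g : MS 𝕜) (d - e a + e b)))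
    set A := d - e a + e b with hA
    have hXf : (MvPowerSeries.X a * pd b f : MS 𝕜) d = ((d b : 𝕜) + 1) * f A := by
      rw [coeff_X_mul, if_pos hle, pd_coeff]
      have h1 : (d - e a) b = d b := by
        rw [Finsupp.tsub_apply, e_apply_ne hab]
        omega
      rw [h1]
    have hXg : (MvPowerSeries.X b * pd a g : MS 𝕜) A = (d a : 𝕜) * g d := by
      have hleb : e b ≤ A := by
        rw [e_le_iff, hA, Finsupp.add_apply, e_apply_same]
        omega
      rw [coeff_X_mul, if_pos hleb, pd_coeff]
      have h1 : A - e b = d - e a := add_tsub_cancel_right _ _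
      have h2 : (A - e b) a = d a - 1 := by
        rw [h1, Finsupp.tsub_apply, e_apply_same]
      have h3 : A - e b + e a = d := by rw [h1, tsub_add_cancel_of_le hle]
      rw [h2, h3]
      congr 1
      have hda : d a - 1 + 1 = d a := by omega
      calc ((d a - 1 : ℕ) : 𝕜) + 1 = (((d a - 1) + 1 : ℕ) : 𝕜) := by push_cast; ring
        _ = (d a : 𝕜) := by rw [hda]
    rw [hXf, hXg, map_mul, map_natCast]
    have hcast : (wt A : 𝕜) * (d a : 𝕜) = (wt d : 𝕜) * ((d b : 𝕜) + 1) := by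
      exact_mod_cast congrArg (Nat.cast : ℕ → 𝕜)
        (wt_swap hab (Nat.one_le_iff_ne_zero.mpr hd2))
    calc (wt d : 𝕜) * (((d b : 𝕜) + 1) * f A * (starRingEnd 𝕜) (g d))
        = ((wt d : 𝕜) * ((d b : 𝕜) + 1)) * (f A * (starRingEnd 𝕜) (g d)) := by ring
      _ = ((wt A : 𝕜) * (d a : 𝕜)) * (f A * (starRingEnd 𝕜) (g d)) := by rw [hcast]
      _ = (wt A : 𝕜) * (f A * ((d a : 𝕜) * (starRingEnd 𝕜) (g d))) := by ring

/-- skew-adjointness of `D` -/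
lemma Bf_skew (k : ℕ) (f g : MS 𝕜) : Bf k (D f) g = -Bf k f (D g) := by
  have h02 := Bf_block (𝕜 := 𝕜) (a := 0) (b := 2) (by decide) k f g
  have h13 := Bf_block (𝕜 := 𝕜) (a := 1) (b := 3) (by decide) k f g
  have h20 := Bf_block (𝕜 := 𝕜) (a := 2) (b := 0) (by decide) k f g
  have h31 := Bf_block (𝕜 := 𝕜) (a := 3) (b := 1) (by decide) k f g
  rw [D, D, Bf_sub_left, Bf_sub_left, Bf_add_left,
    Bf_sub_right, Bf_sub_right, Bf_add_right, h02, h13, h20, h31]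
  ring

lemma Bf_self_eq_zero {k : ℕ} {f : MS 𝕜} (h : Bf k f f = 0) :
    ∀ d, degOf d = k → f d = 0 := by
  intro d hd
  have hreal : Bf k f f = ((∑ x ∈ Sk k, (wt x : ℝ) * ‖f x‖ ^ 2 : ℝ) : 𝕜) := by
    rw [Bf, RCLike.ofReal_sum]
    exact Finset.sum_congr rfl fun x _ => by rw [RCLike.mul_conj]; push_cast; ring
  rw [hreal] at h
  have h0 : (∑ x ∈ Sk k, (wt x : ℝ) * ‖f x‖ ^ 2) = 0 := by exact_mod_cast h
  have hterm := (Finset.sum_eq_zero_iff_of_nonneg (fun x _ => by positivity)).mp h0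
    d (mem_Sk.mpr hd)
  have hwpos : (0 : ℝ) < wt d := by exact_mod_cast wt_pos d
  have h1 : ‖f d‖ ^ 2 = 0 := by
    by_contra hne
    have h2 : 0 < ‖f d‖ ^ 2 := lt_of_le_of_ne (by positivity) (Ne.symm hne)
    nlinarith
  have h3 : ‖f d‖ = 0 := by nlinarith [norm_nonneg (f d)]
  exact norm_eq_zero.mp h3

/-- kernel ∩ image of `D` on homogeneous degree-`k` series is trivial -/
lemma ker_im_D {k : ℕ} {f u : MS 𝕜} (hf : Homog f k) (hker : D f = 0)
    (heq : f = D u) : f = 0 := by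
  have hskew := Bf_skew k u f
  rw [← heq, hker, Bf_zero_right, neg_zero] at hskew
  funext d
  by_cases hd : degOf d = k
  · rw [coeff_zero]
    exact Bf_self_eq_zero hskew d hd
  · rw [coeff_zero]
    exact hf d hd

end S10
end part3
section part4
open S10 MvPowerSeries

namespace S10

variable {R : Type*} [CommRing R]

/-- the monomial with coefficient 1 -/
def Xmon (m : Fin 4 →₀ ℕ) : MS R := MvPowerSeries.monomial m 1

lemma Xmon_zero : (Xmon 0 : MS R) = 1 := MvPowerSeries.monomial_zero_one

lemma Xmon_mul (m m' : Fin 4 →₀ ℕ) : (Xmon m * Xmon m' : MS R) = Xmon (m + m') := by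
  rw [Xmon, Xmon, Xmon, MvPowerSeries.monomial_mul_monomial, one_mul]

lemma Xmon_e (i : Fin 4) : (Xmon (e i) : MS R) = MvPowerSeries.X i := by
  rw [Xmon, e, MvPowerSeries.X_def]

lemma coeff_Xmon (m d : Fin 4 →₀ ℕ) : (Xmon m : MS R) d = if d = m then 1 else 0 :=
  coeff_monomial d m 1

lemma coeff_Xmon_mul (c d : Fin 4 →₀ ℕ) (f : MS R) :
    (Xmon c * f : MS R) d = if c ≤ d then f (d - c) else 0 := by
  rw [Xmon, coeff_monomial_mul]
  split <;> simp

lemma Homog.Xmon_h (m : Fin 4 →₀ ℕ) : Homog (Xmon m : MS R) (degOf m) := by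
  intro d hd
  rw [coeff_Xmon]
  have : d ≠ m := fun h => hd (by rw [h])
  simp [this]

/-- product of powers associated to an exponent -/
def PP (a : Fin 4 → MS R) (m : Fin 4 →₀ ℕ) : MS R := m.prod fun i n => a i ^ n

lemma PP_zero (a : Fin 4 → MS R) : PP a 0 = 1 := Finsupp.prod_zero_index

lemma PP_add_e (a : Fin 4 → MS R) (m : Fin 4 →₀ ℕ) (j : Fin 4) :
    PP a (m + e j) = PP a m * a j := by
  rw [PP, PP, Finsupp.prod_add_index' (fun i => pow_zero (a i)) (fun i b c => pow_add (a i) b c)]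
  congr 1
  rw [e]
  exact (Finsupp.prod_single_index (h := fun i n => a i ^ n) (pow_zero (a j))).trans (pow_one _)

lemma exists_decomp {m : Fin 4 →₀ ℕ} (h : m ≠ 0) :
    ∃ j m', m = m' + e j ∧ degOf m' + 1 = degOf m := by
  have hs : m.support.Nonempty := Finsupp.support_nonempty_iff.mpr h
  obtain ⟨j, hj⟩ := hs
  have hj1 : 1 ≤ m j := by
    have := Finsupp.mem_support_iff.mp hj
    omega
  have hle : e j ≤ m := e_le_iff.mpr hj1
  refine ⟨j, m - e j, ?_, ?_⟩
  · rw [tsub_add_cancel_of_le hle]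
  · rw [degOf_tsub hle, degOf_e]
    have := apply_le_degOf m j
    omega

lemma sub_e_add_e {m : Fin 4 →₀ ℕ} {i j : Fin 4} (hij : i ≠ j) :
    (m + e j) - e i = (m - e i) + e j := by
  ext x
  rw [Finsupp.tsub_apply, Finsupp.add_apply, Finsupp.add_apply, Finsupp.tsub_apply]
  by_cases hx : x = i
  · subst hx
    rw [e_apply_ne (fun h => hij h.symm)]
    omega
  · rw [e_apply_ne (fun h => hx h.symm)]
    omega

/-- key expansion of a product of (X i + s i)^(m i) modulo high-order terms -/
lemma EXP (s : Fin 4 → MS R) (o : ℕ) (ho : 2 ≤ o)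
    (hs : ∀ i d, degOf d < o → s i d = 0) (m : Fin 4 →₀ ℕ) :
    ∃ E : MS R,
      PP (fun i => MvPowerSeries.X i + s i) m
        = Xmon m + (∑ i : Fin 4, (m i : R) • (Xmon (m - e i) * s i)) + E
      ∧ (∀ d, degOf d + 2 < degOf m + 2 * o → E d = 0)
      ∧ (degOf m ≤ 1 → E = 0) := by
  set a : Fin 4 → MS R := fun i => MvPowerSeries.X i + s i with ha
  suffices H : ∀ n m', degOf m' = n → ∃ E : MS R,
      PP a m' = Xmon m' + (∑ i : Fin 4, (m' i : R) • (Xmon (m' - e i) * s i)) + E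
      ∧ (∀ d, degOf d + 2 < degOf m' + 2 * o → E d = 0)
      ∧ (degOf m' ≤ 1 → E = 0) from H (degOf m) m rfl
  intro n
  induction n with
  | zero =>
    intro m' hm'
    have h0 : m' = 0 := degOf_eq_zero hm'
    subst h0
    refine ⟨0, ?_, fun d _ => rfl, fun _ => rfl⟩
    rw [PP_zero, Xmon_zero]
    have hz : ∀ i ∈ (Finset.univ : Finset (Fin 4)),
        ((0 : Fin 4 →₀ ℕ) i : R) • ((Xmon ((0 : Fin 4 →₀ ℕ) - e i) * s i : MS R)) = 0 := by
      intro i _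
      simp
    rw [Finset.sum_congr rfl hz]
    simp
  | succ n ih =>
    intro m hm
    have hne : m ≠ 0 := by
      intro h
      rw [h, degOf_zero] at hm
      omega
    obtain ⟨j, m', hmj, hdeg⟩ := exists_decomp hne
    have hdm' : degOf m' = n := by omega
    obtain ⟨E', hPP', hE'bound, hE'low⟩ := ih m' hdm'
    subst hmj
    have hexp : PP a (m' + e j)
        = (Xmon m' + (∑ i : Fin 4, (m' i : R) • (Xmon (m' - e i) * s i)) + E')
          * (MvPowerSeries.X j + s j) := by
      rw [PP_add_e, hPP']
    set S' : MS R := ∑ i : Fin 4, (m' i : R) • (Xmon (m' - e i) * s i) with hS'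
    refine ⟨S' * s j + E' * (MvPowerSeries.X j + s j), ?_, ?_, ?_⟩
    · -- the algebraic identity
      have h1 : (Xmon m' : MS R) * MvPowerSeries.X j = Xmon (m' + e j) := by
        rw [← Xmon_e, Xmon_mul]
      have hterm : ∀ i : Fin 4,
          ((m' + e j) i : R) • (Xmon ((m' + e j) - e i) * s i : MS R)
            = (m' i : R) • (Xmon (m' - e i) * s i) * MvPowerSeries.X j
              + (if i = j then Xmon m' * s i else 0) := by
        intro i
        by_cases hij : i = j
        · rw [if_pos hij, hij]
          have happ : (m' + e j) j = m' j + 1 := by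
            rw [Finsupp.add_apply, e_apply_same]
          have hsub : (m' + e j) - e j = m' := add_tsub_cancel_right _ _
          rw [happ, hsub]
          by_cases h0 : m' j = 0
          · rw [h0]
            simp
          · have hle : e j ≤ m' := e_le_iff.mpr (by omega)
            have hback : m' - e j + e j = m' := tsub_add_cancel_of_le hle
            have hcomm : ((m' j : R)) • (Xmon (m' - e j) * s j : MS R) * MvPowerSeries.X j
                = (m' j : R) • (Xmon m' * s j) := by
              rw [smul_mul_assoc]
              congr 1
              rw [mul_right_comm, ← Xmon_e, Xmon_mul, hback]
            rw [hcomm]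
            push_cast
            rw [add_smul, one_smul]
        · rw [if_neg hij]
          have happ : (m' + e j) i = m' i := by
            rw [Finsupp.add_apply, e_apply_ne (fun h => hij h.symm)]
            omega
          rw [happ, sub_e_add_e hij, add_zero, smul_mul_assoc]
          congr 1
          rw [mul_right_comm, ← Xmon_e, Xmon_mul]
      have h2 : ∑ i : Fin 4, ((m' + e j) i : R) • (Xmon ((m' + e j) - e i) * s i : MS R)
          = S' * MvPowerSeries.X j + Xmon m' * s j := by
        rw [Finset.sum_congr rfl (fun i _ => hterm i), Finset.sum_add_distrib,
          Finset.sum_ite_eq' Finset.univ j (fun i => (Xmon m' * s i : MS R)),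
          if_pos (Finset.mem_univ j), hS', Finset.sum_mul]
      have halg : (Xmon m' + S' + E') * (MvPowerSeries.X j + s j)
          = (Xmon m' * MvPowerSeries.X j) + (S' * MvPowerSeries.X j + Xmon m' * s j)
            + (S' * s j + E' * (MvPowerSeries.X j + s j)) := by ring
      rw [hexp, halg, h1, h2]
    · -- the degree bound
      intro d hd
      rw [coeff_add]
      have hpart2 : (E' * (MvPowerSeries.X j + s j) : MS R) d = 0 := by
        rw [coeff_mul]
        refine Finset.sum_eq_zero fun p hp => ?_
        rw [Finset.HasAntidiagonal.mem_antidiagonal] at hp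
        have hdeg2 : degOf p.1 + degOf p.2 = degOf d := by rw [← degOf_add, hp]
        by_cases hv : p.2 = 0
        · have : (MvPowerSeries.X j + s j : MS R) p.2 = 0 := by
            rw [hv, coeff_add, coeff_X, hs j 0 (by rw [degOf_zero]; omega)]
            have : (0 : Fin 4 →₀ ℕ) ≠ e j := by
              intro h
              have := DFunLike.congr_fun h j
              rw [e_apply_same] at this
              simp at this
            simp [this]
          rw [this, mul_zero]
        · have hv1 : 1 ≤ degOf p.2 := by
            by_contra hc
            push_neg at hc
            exact hv (degOf_eq_zero (by omega))
          have : E' p.1 = 0 := by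
            refine hE'bound p.1 ?_
            rw [hdm']
            omega
          rw [this, zero_mul]
      have hpart1 : (S' * s j : MS R) d = 0 := by
        rw [hS', Finset.sum_mul, coeff_sum]
        refine Finset.sum_eq_zero fun i _ => ?_
        rw [smul_mul_assoc, coeff_smul]
        by_cases h0 : m' i = 0
        · rw [h0]
          simp
        · have hle : e i ≤ m' := e_le_iff.mpr (by omega)
          have hdegc : degOf (m' - e i) = n - 1 := by
            rw [degOf_tsub hle, degOf_e, hdm']
          have hn1 : 1 ≤ n := by
            have := apply_le_degOf m' i
            omega
          rw [mul_assoc, coeff_Xmon_mul]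
          split
          · next hcle =>
            have hdle : degOf (m' - e i) ≤ degOf d := degOf_mono hcle
            have : (s i * s j : MS R) (d - (m' - e i)) = 0 := by
              refine mul_coeff_eq_zero (hs i) (hs j) ?_
              rw [degOf_tsub hcle, hdegc]
              omega
            rw [this, mul_zero]
          · rw [mul_zero]
      rw [hpart1, hpart2, add_zero]
    · -- low degree: everything vanishes
      intro hlow
      have hn0 : n = 0 := by omega
      have hm'0 : m' = 0 := degOf_eq_zero (by omega)
      have hS'0 : S' = 0 := by
        rw [hS']
        refine Finset.sum_eq_zero fun i _ => ?_
        rw [hm'0]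
        simp
      have hE'0 : E' = 0 := hE'low (by omega)
      rw [hS'0, hE'0, zero_mul, zero_mul, add_zero]

end S10
end part4
section part5
open S10 MvPowerSeries

namespace S10

/-- the truncation bound -/
def NN (k : ℕ) : Fin 4 →₀ ℕ := Finsupp.equivFunOnFinite.symm fun _ => k + 1

lemma NN_apply (k : ℕ) (i : Fin 4) : NN k i = k + 1 := rfl

lemma mem_Iio_NN {m : Fin 4 →₀ ℕ} {k : ℕ} (h : degOf m ≤ k) :
    m ∈ Finset.Iio (NN k) := by
  rw [Finset.mem_Iio, lt_iff_le_and_ne]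
  constructor
  · intro i
    have := apply_le_degOf m i
    rw [NN_apply]
    omega
  · intro hc
    have h0 : m 0 = k + 1 := by rw [hc, NN_apply]
    have := apply_le_degOf m 0
    omega

lemma substPS_coeff (a : Fin 4 → PS) (G : PS) (d : Fin 4 →₀ ℕ) :
    substPS a G d = ∑ m ∈ Finset.Iio (NN (degOf d)), G m * (PP a m) d := by
  classical
  have hdef : substPS a G d = MvPowerSeries.coeff d
      (MvPolynomial.aeval a (MvPowerSeries.trunc ℝ (NN (degOf d)) G)) := rfl
  rw [hdef]
  set p := MvPowerSeries.trunc ℝ (NN (degOf d)) G with hp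
  rw [MvPolynomial.aeval_def, MvPolynomial.eval₂_eq]
  have hsub : p.support ⊆ Finset.Iio (NN (degOf d)) := by
    intro m hm
    have := MvPolynomial.mem_support_iff.mp hm
    rw [hp, MvPowerSeries.coeff_trunc] at this
    rw [Finset.mem_Iio]
    by_contra hc
    rw [if_neg hc] at this
    exact this rfl
  rw [Finset.sum_subset hsub (fun m _ hm => by
    have h0 : MvPolynomial.coeff m p = 0 := MvPolynomial.notMem_support_iff.mp hm
    rw [h0, map_zero, zero_mul])]
  rw [map_sum]
  refine Finset.sum_congr rfl fun m hm => ?_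
  have hcoeff : MvPolynomial.coeff m p = G m := by
    rw [hp, MvPowerSeries.coeff_trunc, if_pos (Finset.mem_Iio.mp hm)]
    rfl
  have hPP : (∏ i ∈ m.support, a i ^ m i) = PP a m := rfl
  rw [hPP, hcoeff, ← MvPowerSeries.c_eq_algebraMap]
  exact coeff_C_mul (G m) (PP a m) d

/-- coefficient formula for the product of powers at degree k -/
lemma PP_coeff_eq {s : Fin 4 → PS} {o k : ℕ} (ho : 2 ≤ o) (hko : k + 1 ≤ 2 * o)
    (hs : ∀ i d, degOf d < o → s i d = 0) (m : Fin 4 →₀ ℕ) {d : Fin 4 →₀ ℕ}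
    (hd : degOf d = k) :
    (PP (fun i => MvPowerSeries.X i + s i) m) d
      = (if d = m then 1 else 0)
        + ∑ i : Fin 4, (m i : ℝ) * ((Xmon (m - e i) * s i : PS) d) := by
  obtain ⟨E, hPP, hEb, hEl⟩ := EXP s o ho hs m
  rw [hPP, coeff_add, coeff_add, coeff_Xmon, coeff_sum]
  have hE : E d = 0 := by
    by_cases hm : degOf m ≤ 1
    · rw [hEl hm]
      rfl
    · exact hEb d (by omega)
  rw [hE, add_zero]
  rfl

/-- twice a unit vector -/
def tw (j : Fin 4) : Fin 4 →₀ ℕ := e j + e j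

lemma degOf_tw (j : Fin 4) : degOf (tw j) = 2 := by
  rw [tw, degOf_add, degOf_e]

lemma tw_apply_same (j : Fin 4) : tw j j = 2 := by
  rw [tw, Finsupp.add_apply, e_apply_same]

lemma tw_apply_ne {i j : Fin 4} (h : j ≠ i) : tw j i = 0 := by
  rw [tw, Finsupp.add_apply, e_apply_ne h]

lemma tw_inj : Function.Injective tw := by
  intro i j h
  by_contra hij
  have h1 := DFunLike.congr_fun h i
  rw [tw_apply_same, tw_apply_ne (fun hc : j = i => hij hc.symm)] at h1
  omega

lemma tw_sub_e (j : Fin 4) : tw j - e j = e j := by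
  rw [tw, add_tsub_cancel_right]

/-- THE KEY LEMMA: coefficient extraction from the substitution -/
lemma SUBKEY {G : PS} {s : Fin 4 → PS} {k δ : ℕ}
    (h3k : 3 ≤ k) (hk : k ≤ 2 * δ - 3) (hδ : 4 ≤ δ)
    (hG0 : ∀ m, degOf m = 0 → G m = 0)
    (hG1 : ∀ m, degOf m = 1 → G m = 0)
    (hG2a : ∀ j, G (tw j) = 2⁻¹)
    (hG2b : ∀ m, degOf m = 2 → (∀ j, m ≠ tw j) → G m = 0)
    (hGmid : ∀ m, 3 ≤ degOf m → degOf m ≤ k - 1 → degOf m ≠ δ → G m = 0)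
    (hs0 : ∀ i d', s i d' ≠ 0 → degOf d' = δ - 1 ∨ k - 1 ≤ degOf d')
    {d : Fin 4 →₀ ℕ} (hd : degOf d = k) :
    substPS (fun i => MvPowerSeries.X i + s i) G d
      = G d + ∑ j : Fin 4, (MvPowerSeries.X j * s j : PS) d := by
  classical
  set o : ℕ := min (δ - 1) (k - 1) with hoo
  have ho : 2 ≤ o := by omega
  have hko : k + 1 ≤ 2 * o := by omega
  have hs : ∀ i d', degOf d' < o → s i d' = 0 := by
    intro i d' hd'
    by_contra hc
    rcases hs0 i d' hc with h | h <;> omega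
  rw [substPS_coeff, hd]
  rw [Finset.sum_congr rfl (fun m _ => by rw [PP_coeff_eq ho hko hs m hd])]
  have hsplit : ∑ m ∈ Finset.Iio (NN k),
      G m * ((if d = m then 1 else 0)
        + ∑ i : Fin 4, (m i : ℝ) * ((Xmon (m - e i) * s i : PS) d))
      = (∑ m ∈ Finset.Iio (NN k), G m * (if d = m then 1 else 0))
        + ∑ m ∈ Finset.Iio (NN k),
            G m * ∑ i : Fin 4, (m i : ℝ) * ((Xmon (m - e i) * s i : PS) d) := by
    rw [← Finset.sum_add_distrib]
    exact Finset.sum_congr rfl fun m _ => by ring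
  rw [hsplit]
  congr 1
  · -- first sum picks out G d
    have hdmem : d ∈ Finset.Iio (NN k) := mem_Iio_NN (by omega)
    rw [Finset.sum_eq_single d]
    · rw [if_pos rfl, mul_one]
    · intro m _ hne
      rw [if_neg (fun h => hne h.symm), mul_zero]
    · intro habs
      exact absurd hdmem habs
  · -- second sum: only m = tw j contribute
    have hFzero : ∀ m ∈ Finset.Iio (NN k), m ∉ Finset.image tw Finset.univ →
        G m * ∑ i : Fin 4, (m i : ℝ) * ((Xmon (m - e i) * s i : PS) d) = 0 := by
      intro m _ hmim
      by_cases hGm : G m = 0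
      · rw [hGm, zero_mul]
      · rw [Finset.sum_eq_zero, mul_zero]
        intro i _
        by_cases h0 : m i = 0
        · rw [h0]
          simp
        · rw [coeff_Xmon_mul]
          split
          · next hcle =>
            have hle : e i ≤ m := e_le_iff.mpr (by omega)
            have hdegc : degOf (m - e i) = degOf m - 1 := by
              rw [degOf_tsub hle, degOf_e]
            have hdegu : degOf (d - (m - e i)) = k - (degOf m - 1) := by
              rw [degOf_tsub hcle, hdegc, hd]
            have hm1 : 1 ≤ degOf m := by
              have := apply_le_degOf m i
              omega
            have hmk : degOf m - 1 ≤ k := by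
              have := degOf_mono hcle
              omega
            -- show the s-coefficient vanishes
            have hsz : s i (d - (m - e i)) = 0 := by
              by_contra hc
              rcases hs0 i _ hc with hcase | hcase
              · -- degree δ - 1
                rw [hdegu] at hcase
                have hM : degOf m = k + 2 - δ := by omega
                by_cases hM2 : degOf m ≤ 2
                · -- then G m = 0, contradiction
                  interval_cases h : degOf m
                  · exact hGm (hG1 m h)
                  · refine hGm (hG2b m h fun j hj => hmim ?_)
                    rw [hj]
                    exact Finset.mem_image_of_mem tw (Finset.mem_univ j)
                · refine hGm (hGmid m (by omega) (by omega) (by omega))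
              · -- degree ≥ k - 1
                rw [hdegu] at hcase
                have hM2 : degOf m ≤ 2 := by omega
                interval_cases h : degOf m
                · exact hGm (hG1 m h)
                · refine hGm (hG2b m h fun j hj => hmim ?_)
                  rw [hj]
                  exact Finset.mem_image_of_mem tw (Finset.mem_univ j)
            rw [hsz, mul_zero]
          · rw [mul_zero]
    have himsub : Finset.image tw Finset.univ ⊆ Finset.Iio (NN k) := by
      intro m hm
      obtain ⟨j, _, hj⟩ := Finset.mem_image.mp hm
      refine mem_Iio_NN ?_
      rw [← hj, degOf_tw]
      omega
    rw [← Finset.sum_subset himsub hFzero]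
    rw [Finset.sum_image (fun x _ y _ h => tw_inj h)]
    refine Finset.sum_congr rfl fun j _ => ?_
    have hinner : ∑ i : Fin 4, ((tw j) i : ℝ) * ((Xmon (tw j - e i) * s i : PS) d)
        = 2 * ((Xmon (e j) * s j : PS) d) := by
      rw [Finset.sum_eq_single j]
      · rw [tw_apply_same, tw_sub_e]
        norm_num
      · intro i _ hne
        rw [tw_apply_ne (fun h : j = i => hne h.symm)]
        simp
      · intro habs
        exact absurd (Finset.mem_univ j) habs
    rw [hinner, hG2a j, Xmon_e]
    ring

end S10
end part5
section part6
open S10 MvPowerSeries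

namespace S10

/-! ### homPart lemmas -/

lemma homPart_coeff (k : ℕ) (f : PS) (d : Fin 4 →₀ ℕ) :
    homPart k f d = if degOf d = k then f d else 0 := rfl

lemma homPart_coeff_self {k : ℕ} {f : PS} {d : Fin 4 →₀ ℕ} (hd : degOf d = k) :
    homPart k f d = f d := by rw [homPart_coeff, if_pos hd]

lemma homPart_zero_iff {k : ℕ} {f : PS} :
    homPart k f = 0 ↔ ∀ d, degOf d = k → f d = 0 := by
  constructor
  · intro h d hd
    have := congrFun h d
    rw [homPart_coeff, if_pos hd] at this
    exact this
  · intro h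
    funext d
    rw [homPart_coeff]
    split
    · next hd => rw [h d hd]; rfl
    · rfl

lemma homPart_homog (k : ℕ) (f : PS) : Homog (homPart k f) k := by
  intro d hd
  rw [homPart_coeff, if_neg hd]

lemma homog_homPart_self {f : PS} {k : ℕ} (h : Homog f k) : homPart k f = f := by
  funext d
  rw [homPart_coeff]
  split
  · rfl
  · next hd => rw [h d hd]

lemma homog_homPart_zero {f : PS} {k j : ℕ} (h : Homog f k) (hjk : j ≠ k) :
    homPart j f = 0 :=
  homPart_zero_iff.mpr fun d hd => h d (by omega)

/-! ### locality of D -/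

lemma coeff_Xpd_congr {f g : PS} {d : Fin 4 →₀ ℕ} (a b : Fin 4)
    (h : ∀ u, degOf u = degOf d → f u = g u) :
    (MvPowerSeries.X a * pd b f : PS) d = (MvPowerSeries.X a * pd b g : PS) d := by
  rw [coeff_X_mul, coeff_X_mul]
  split
  · next hle =>
    rw [pd_coeff, pd_coeff]
    congr 1
    refine h _ ?_
    rw [degOf_add, degOf_tsub hle, degOf_e, degOf_e]
    have h1 : degOf (e a) ≤ degOf d := degOf_mono hle
    rw [degOf_e] at h1
    omega
  · rfl

lemma coeff_D_congr {f g : PS} {d : Fin 4 →₀ ℕ}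
    (h : ∀ u, degOf u = degOf d → f u = g u) : (D f) d = (D g) d := by
  rw [D, D, coeff_sub, coeff_sub, coeff_add, coeff_sub, coeff_sub, coeff_add,
    coeff_Xpd_congr 0 2 h, coeff_Xpd_congr 1 3 h, coeff_Xpd_congr 2 0 h,
    coeff_Xpd_congr 3 1 h]

lemma D_homPart_coeff {f : PS} {k : ℕ} {d : Fin 4 →₀ ℕ} (hd : degOf d = k) :
    (D f) d = (D (homPart k f)) d :=
  coeff_D_congr fun u hu => (homPart_coeff_self (by omega)).symm

lemma Homog_D {f : PS} {k : ℕ} (h : Homog f k) : Homog (D f) k := by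
  intro d hd
  have hterm : ∀ a b : Fin 4, (MvPowerSeries.X a * pd b f : PS) d = 0 := by
    intro a b
    rw [coeff_X_mul]
    split
    · next hle =>
      rw [pd_coeff]
      have : f (d - e a + e b) = 0 := by
        refine h _ ?_
        rw [degOf_add, degOf_tsub hle, degOf_e, degOf_e]
        have h1 : degOf (e a) ≤ degOf d := degOf_mono hle
        rw [degOf_e] at h1
        omega
      rw [this, mul_zero]
    · rfl
  rw [D, coeff_sub, coeff_sub, coeff_add, hterm, hterm, hterm, hterm]
  ring

/-! ### coefficients of `X i ^ 2` and the quadratic parts -/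

lemma X_sq_eq_Xmon (i : Fin 4) : (MvPowerSeries.X i ^ 2 : PS) = Xmon (tw i) := by
  rw [pow_two, ← Xmon_e, Xmon_mul, tw]

lemma coeff_X_sq (i : Fin 4) (m : Fin 4 →₀ ℕ) :
    (MvPowerSeries.X i ^ 2 : PS) m = if m = tw i then 1 else 0 := by
  rw [X_sq_eq_Xmon, coeff_Xmon]

lemma coeff_XX (i : Fin 4) {d : Fin 4 →₀ ℕ} {k : ℕ} (hd : degOf d = k) (h3 : 3 ≤ k) :
    (MvPowerSeries.X i * MvPowerSeries.X i : PS) d = 0 := by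
  rw [← pow_two, coeff_X_sq]
  have : d ≠ tw i := by
    intro h
    rw [h, degOf_tw] at hd
    omega
  simp [this]

/-- coefficients of the quadratic part of `G` -/
lemma G2_coeffs {G : PS}
    (hG2 : homPart 2 G = (2⁻¹ : ℝ) • (MvPowerSeries.X 0 ^ 2 + MvPowerSeries.X 1 ^ 2
      + MvPowerSeries.X 2 ^ 2 + MvPowerSeries.X 3 ^ 2)) :
    (∀ j, G (tw j) = 2⁻¹) ∧ (∀ m, degOf m = 2 → (∀ j, m ≠ tw j) → G m = 0) := by
  have key : ∀ m, degOf m = 2 → G m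
      = 2⁻¹ * ((if m = tw 0 then (1:ℝ) else 0) + (if m = tw 1 then 1 else 0)
        + (if m = tw 2 then 1 else 0) + (if m = tw 3 then 1 else 0)) := by
    intro m hm
    have := congrFun hG2 m
    rw [homPart_coeff, if_pos hm] at this
    rw [this, coeff_smul, coeff_add, coeff_add, coeff_add,
      coeff_X_sq, coeff_X_sq, coeff_X_sq, coeff_X_sq]
  constructor
  · intro j
    rw [key (tw j) (degOf_tw j)]
    have hif : ∀ i : Fin 4, (if tw j = tw i then (1:ℝ) else 0) = if j = i then 1 else 0 := by
      intro i
      by_cases h : j = i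
      · subst h; simp
      · rw [if_neg (fun hc => h (tw_inj hc)), if_neg h]
    rw [hif 0, hif 1, hif 2, hif 3]
    fin_cases j <;> simp
  · intro m hm hne
    rw [key m hm, if_neg (hne 0), if_neg (hne 1), if_neg (hne 2), if_neg (hne 3)]
    norm_num

/-- coefficients of the quadratic part of `W` -/
lemma W2_coeffs {W : PS}
    (hW2 : homPart 2 W = MvPowerSeries.X 0 * MvPowerSeries.X 2
      + MvPowerSeries.X 1 * MvPowerSeries.X 3) :
    ∀ m, degOf m = 2 → W m = (((Xmon (e 0 + e 2) : PS) + Xmon (e 1 + e 3) : PS)) m := by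
  intro m hm
  have := congrFun hW2 m
  rw [homPart_coeff, if_pos hm] at this
  rw [this]
  rw [← Xmon_e (R := ℝ) 0, ← Xmon_e (R := ℝ) 1, ← Xmon_e (R := ℝ) 2, ← Xmon_e (R := ℝ) 3,
    Xmon_mul, Xmon_mul]

/-- the degree-1 part of `pd α W` is `X β` for matched index pairs -/
lemma pdW_linear {W : PS} {m2 : Fin 4 →₀ ℕ} (α β : Fin 4)
    (h2 : ∀ m, degOf m = 2 → W m = (((Xmon (e β + e α) : PS) + Xmon m2 : PS)) m)
    (hm2 : m2 α = 0) (hβα : (e β) α = 0) :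
    ∀ d', degOf d' = 1 → (pd α W) d' = (MvPowerSeries.X β : PS) d' := by
  intro d' hd'
  rw [pd_coeff, coeff_X]
  have hdeg : degOf (d' + e α) = 2 := by rw [degOf_add, degOf_e]; omega
  rw [h2 _ hdeg, coeff_add, coeff_Xmon, coeff_Xmon]
  have h2nd : (if d' + e α = m2 then (1:ℝ) else 0) = 0 := by
    rw [if_neg]
    intro hc
    have := DFunLike.congr_fun hc α
    rw [Finsupp.add_apply, e_apply_same, hm2] at this
    omega
  have h1st : (d' + e α = e β + e α) ↔ d' = e β := by
    constructor
    · exact fun h => add_right_cancel h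
    · intro h; rw [h]
  rw [h2nd, add_zero]
  by_cases hc : d' = e β
  · rw [if_pos (h1st.mpr hc), if_pos hc, hc, hβα]
    norm_num
  · rw [if_neg (fun h => hc (h1st.mp h)), if_neg hc, mul_zero]

/-- support property of the nonlinear part of `pd α W` -/
lemma s_support {W : PS} {k δ : ℕ} (α β : Fin 4)
    (hlin : ∀ d', degOf d' = 1 → (pd α W) d' = (MvPowerSeries.X β : PS) d')
    (hW1 : ∀ m, degOf m = 1 → W m = 0)
    (hWlow : ∀ m, 3 ≤ degOf m → degOf m ≤ k - 1 → degOf m ≠ δ → W m = 0)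
    (h3k : 3 ≤ k) :
    ∀ d', (pd α W - MvPowerSeries.X β : PS) d' ≠ 0
      → degOf d' = δ - 1 ∨ k - 1 ≤ degOf d' := by
  intro d' hne
  by_contra hc
  push_neg at hc
  obtain ⟨hc1, hc2⟩ := hc
  apply hne
  rw [coeff_sub]
  rcases Nat.lt_or_ge (degOf d') 2 with hlt | hge
  · interval_cases hh : degOf d'
    · -- degree 0
      have hd0 : d' = 0 := degOf_eq_zero hh
      have hW : W (d' + e α) = 0 := hW1 _ (by rw [degOf_add, degOf_e, hh])
      rw [pd_coeff, hW, mul_zero, coeff_X]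
      have : d' ≠ e α ∧ d' ≠ e β := by
        constructor <;> intro h <;> rw [h, degOf_e] at hh <;> omega
      rw [if_neg this.2]
      ring
    · -- degree 1
      rw [hlin d' hh]
      ring
  · -- degree ≥ 2
    have hW : W (d' + e α) = 0 := by
      refine hWlow _ ?_ ?_ ?_ <;> rw [degOf_add, degOf_e] <;> omega
    rw [pd_coeff, hW, mul_zero, coeff_X]
    have : d' ≠ e β := by
      intro h
      rw [h, degOf_e] at hge
      omega
    rw [if_neg this]
    ring

/-- the `V` part of the Hamiltonian as a power series -/
def VsS (δ : ℕ) (v : ℕ → ℝ) : PS :=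
  ∑ h ∈ Finset.range (δ + 1),
    MvPowerSeries.C (σ := Fin 4) (R := ℝ) (v h * (δ.choose h : ℝ))
      * MvPowerSeries.X 0 ^ h * MvPowerSeries.X 1 ^ (δ - h)

lemma VsS_homog (δ : ℕ) (v : ℕ → ℝ) : Homog (VsS δ v) δ := by
  refine Homog.sum _ _ fun h hh => ?_
  rw [Finset.mem_range] at hh
  have h1 : Homog (MvPowerSeries.X 0 ^ h : PS) (h * 1) := (Homog.X 0).pow h
  have h2 : Homog (MvPowerSeries.X 1 ^ (δ - h) : PS) ((δ - h) * 1) := (Homog.X 1).pow (δ - h)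
  have h3 : Homog (MvPowerSeries.C (σ := Fin 4) (R := ℝ) (v h * (δ.choose h : ℝ))
      * MvPowerSeries.X 0 ^ h * MvPowerSeries.X 1 ^ (δ - h) : PS) (h * 1 + (δ - h) * 1) := by
    rw [mul_assoc]
    exact Homog.C_mul _ (h1.mul h2)
  have : h * 1 + (δ - h) * 1 = δ := by omega
  rwa [this] at h3

end S10
end part6
section part7
open S10 MvPowerSeries

namespace S10

/-- the homological equation at degree `k` -/
lemma HOMEQ {δ : ℕ} {v : ℕ → ℝ} {G W : PS} {k : ℕ}
    (hδ : 4 ≤ δ) (h3k : 3 ≤ k) (hk : k ≤ 2 * δ - 3)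
    (hG0 : homPart 0 G = 0) (hG1 : homPart 1 G = 0)
    (hG2 : homPart 2 G = (2⁻¹ : ℝ) • (MvPowerSeries.X 0 ^ 2 + MvPowerSeries.X 1 ^ 2
      + MvPowerSeries.X 2 ^ 2 + MvPowerSeries.X 3 ^ 2))
    (hGmid : ∀ j, 3 ≤ j → j ≤ k - 1 → j ≠ δ → homPart j G = 0)
    (hW1 : homPart 1 W = 0)
    (hW2 : homPart 2 W = MvPowerSeries.X 0 * MvPowerSeries.X 2
      + MvPowerSeries.X 1 * MvPowerSeries.X 3)
    (hWmid : ∀ j, 3 ≤ j → j ≤ k - 1 → j ≠ δ → homPart j W = 0)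
    (heq : substPS ![pdPS 2 W, pdPS 3 W, MvPowerSeries.X 2, MvPowerSeries.X 3] G =
      MvPolynomial.aeval ![MvPowerSeries.X 0, MvPowerSeries.X 1, pdPS 0 W, pdPS 1 W]
        (PHO δ v)) :
    homPart k G + Dop (homPart k W) = homPart k (VsS δ v) := by
  classical
  -- coefficient-level facts
  have hW1' : ∀ m, degOf m = 1 → W m = 0 := homPart_zero_iff.mp hW1
  have hWlow' : ∀ m, 3 ≤ degOf m → degOf m ≤ k - 1 → degOf m ≠ δ → W m = 0 :=
    fun m h1 h2 h3 => homPart_zero_iff.mp (hWmid (degOf m) h1 h2 h3) m rfl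
  have hW2' := W2_coeffs hW2
  -- the four linear parts
  have hlin20 : ∀ d', degOf d' = 1 → (pd 2 W) d' = (MvPowerSeries.X 0 : PS) d' :=
    pdW_linear 2 0 (m2 := e 1 + e 3) hW2'
      (by rw [Finsupp.add_apply, e_apply_ne (by decide), e_apply_ne (by decide)])
      (e_apply_ne (by decide))
  have hlin31 : ∀ d', degOf d' = 1 → (pd 3 W) d' = (MvPowerSeries.X 1 : PS) d' := by
    refine pdW_linear 3 1 (m2 := e 0 + e 2) ?_
      (by rw [Finsupp.add_apply, e_apply_ne (by decide), e_apply_ne (by decide)])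
      (e_apply_ne (by decide))
    intro m hm
    rw [hW2' m hm, coeff_add, coeff_add, add_comm]
  have hlin02 : ∀ d', degOf d' = 1 → (pd 0 W) d' = (MvPowerSeries.X 2 : PS) d' := by
    refine pdW_linear 0 2 (m2 := e 1 + e 3) ?_
      (by rw [Finsupp.add_apply, e_apply_ne (by decide), e_apply_ne (by decide)])
      (e_apply_ne (by decide))
    intro m hm
    rw [hW2' m hm]
    have : e 2 + e 0 = e 0 + e 2 := add_comm _ _
    rw [this]
  have hlin13 : ∀ d', degOf d' = 1 → (pd 1 W) d' = (MvPowerSeries.X 3 : PS) d' := by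
    refine pdW_linear 1 3 (m2 := e 0 + e 2) ?_
      (by rw [Finsupp.add_apply, e_apply_ne (by decide), e_apply_ne (by decide)])
      (e_apply_ne (by decide))
    intro m hm
    rw [hW2' m hm, coeff_add, coeff_add, add_comm]
    have : e 3 + e 1 = e 1 + e 3 := add_comm _ _
    rw [this]
  -- support properties of the nonlinear remainders
  have hsup20 := s_support (δ := δ) 2 0 hlin20 hW1' hWlow' h3k
  have hsup31 := s_support (δ := δ) 3 1 hlin31 hW1' hWlow' h3k
  have hsup02 := s_support (δ := δ) 0 2 hlin02 hW1' hWlow' h3k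
  have hsup13 := s_support (δ := δ) 1 3 hlin13 hW1' hWlow' h3k
  -- the remainder vector on the G-side
  set sL : Fin 4 → PS :=
    ![pd 2 W - MvPowerSeries.X 0, pd 3 W - MvPowerSeries.X 1, 0, 0] with hsL
  have hsL0 : sL 0 = pd 2 W - MvPowerSeries.X 0 := rfl
  have hsL1 : sL 1 = pd 3 W - MvPowerSeries.X 1 := rfl
  have hsL2 : sL 2 = 0 := rfl
  have hsL3 : sL 3 = 0 := rfl
  have hAfun : (![pdPS 2 W, pdPS 3 W, MvPowerSeries.X 2, MvPowerSeries.X 3] : Fin 4 → PS)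
      = fun i => MvPowerSeries.X i + sL i := by
    funext i
    fin_cases i
    · show pdPS 2 W = MvPowerSeries.X 0 + sL 0
      rw [hsL0, ← pd_eq_pdPS]
      ring
    · show pdPS 3 W = MvPowerSeries.X 1 + sL 1
      rw [hsL1, ← pd_eq_pdPS]
      ring
    · show MvPowerSeries.X 2 = MvPowerSeries.X 2 + sL 2
      rw [hsL2, add_zero]
    · show MvPowerSeries.X 3 = MvPowerSeries.X 3 + sL 3
      rw [hsL3, add_zero]
  rw [hAfun] at heq
  have hs0 : ∀ i d', sL i d' ≠ 0 → degOf d' = δ - 1 ∨ k - 1 ≤ degOf d' := by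
    intro i
    fin_cases i
    · exact fun d' h => hsup20 d' h
    · exact fun d' h => hsup31 d' h
    · intro d' h
      exact absurd rfl h
    · intro d' h
      exact absurd rfl h
  -- the order of the t-remainders
  have hto : ∀ (α β : Fin 4),
      (∀ d', (pd α W - MvPowerSeries.X β : PS) d' ≠ 0
        → degOf d' = δ - 1 ∨ k - 1 ≤ degOf d')
      → ∀ d', degOf d' < min (δ - 1) (k - 1)
        → (pd α W - MvPowerSeries.X β : PS) d' = 0 := by
    intro α β hsup d' hd'
    by_contra hc
    rcases hsup d' hc with h | h <;> omega
  -- now prove the series identity coefficientwise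
  funext d
  by_cases hd : degOf d = k
  case neg =>
    rw [coeff_add, homPart_coeff, if_neg hd, homPart_coeff, if_neg hd, ← D_eq_Dop,
      Homog_D (homPart_homog k W) d hd]
    ring
  case pos =>
    -- G-side
    have hGside := congrFun heq d
    have hG0' := homPart_zero_iff.mp hG0
    have hG1' := homPart_zero_iff.mp hG1
    obtain ⟨hG2a, hG2b⟩ := G2_coeffs hG2
    have hGmid' : ∀ m, 3 ≤ degOf m → degOf m ≤ k - 1 → degOf m ≠ δ → G m = 0 :=
      fun m h1 h2 h3 => homPart_zero_iff.mp (hGmid (degOf m) h1 h2 h3) m rfl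
    rw [SUBKEY h3k hk hδ hG0' hG1' hG2a hG2b hGmid' hs0 hd] at hGside
    -- RHS expansion
    set t2 : PS := pd 0 W - MvPowerSeries.X 2 with ht2
    set t3 : PS := pd 1 W - MvPowerSeries.X 3 with ht3
    have hb0 : (![MvPowerSeries.X 0, MvPowerSeries.X 1, pdPS 0 W, pdPS 1 W] : Fin 4 → PS) 0
        = MvPowerSeries.X 0 := rfl
    have hb1 : (![MvPowerSeries.X 0, MvPowerSeries.X 1, pdPS 0 W, pdPS 1 W] : Fin 4 → PS) 1
        = MvPowerSeries.X 1 := rfl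
    have hb2 : (![MvPowerSeries.X 0, MvPowerSeries.X 1, pdPS 0 W, pdPS 1 W] : Fin 4 → PS) 2
        = pd 0 W := rfl
    have hb3 : (![MvPowerSeries.X 0, MvPowerSeries.X 1, pdPS 0 W, pdPS 1 W] : Fin 4 → PS) 3
        = pd 1 W := rfl
    have hRHS : MvPolynomial.aeval
        (![MvPowerSeries.X 0, MvPowerSeries.X 1, pdPS 0 W, pdPS 1 W] : Fin 4 → PS) (PHO δ v)
        = MvPowerSeries.C (σ := Fin 4) (R := ℝ) (2⁻¹ : ℝ)
            * (MvPowerSeries.X 0 ^ 2 + MvPowerSeries.X 1 ^ 2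
              + (pd 0 W) ^ 2 + (pd 1 W) ^ 2)
          + VsS δ v := by
      rw [PHO, map_add]
      congr 1
      · rw [map_mul, MvPolynomial.aeval_C, map_add, map_add, map_add,
          map_pow, map_pow, map_pow, map_pow,
          MvPolynomial.aeval_X, MvPolynomial.aeval_X, MvPolynomial.aeval_X,
          MvPolynomial.aeval_X, hb0, hb1, hb2, hb3, ← MvPowerSeries.c_eq_algebraMap]
      · rw [Vpoly, map_sum, VsS]
        refine Finset.sum_congr rfl fun h _ => ?_
        rw [map_mul, map_mul, MvPolynomial.aeval_C, map_pow, map_pow,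
          MvPolynomial.aeval_X, MvPolynomial.aeval_X, hb0, hb1,
          ← MvPowerSeries.c_eq_algebraMap]
    rw [hRHS] at hGside
    -- coefficient of the RHS
    have hXsq : ∀ i : Fin 4, (MvPowerSeries.X i ^ 2 : PS) d = 0 := by
      intro i
      rw [coeff_X_sq]
      have : d ≠ tw i := by
        intro h
        rw [h, degOf_tw] at hd
        omega
      simp [this]
    have hosum : min (δ - 1) (k - 1) + min (δ - 1) (k - 1) > k := by omega
    have hpdsq : ∀ (α β : Fin 4) (t : PS), t = pd α W - MvPowerSeries.X β
        → (∀ d', degOf d' < min (δ - 1) (k - 1) → t d' = 0)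
        → ((pd α W) ^ 2 : PS) d = 2 * (MvPowerSeries.X β * t : PS) d := by
      intro α β t ht htord
      have hsplit : ((pd α W) ^ 2 : PS)
          = MvPowerSeries.X β * MvPowerSeries.X β
            + (MvPowerSeries.X β * t + MvPowerSeries.X β * t) + t * t := by
        rw [ht]
        ring
      rw [hsplit, coeff_add, coeff_add, coeff_add,
        coeff_XX β hd h3k,
        mul_coeff_eq_zero htord htord (by omega)]
      ring
    have ht2' := hto 0 2 hsup02
    have ht3' := hto 1 3 hsup13
    have h2sq := hpdsq 0 2 t2 ht2 ht2'
    have h3sq := hpdsq 1 3 t3 ht3 ht3'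
    -- assemble
    rw [coeff_add, coeff_C_mul, coeff_add, coeff_add, coeff_add,
      hXsq 0, hXsq 1, h2sq, h3sq] at hGside
    -- expand the sL sum
    rw [Fin.sum_univ_four, hsL0, hsL1, hsL2, hsL3] at hGside
    have hz2 : (MvPowerSeries.X 2 * (0 : PS) : PS) d = 0 := by rw [mul_zero]; rfl
    have hz3 : (MvPowerSeries.X 3 * (0 : PS) : PS) d = 0 := by rw [mul_zero]; rfl
    rw [hz2, hz3] at hGside
    have hexp := fun (α β : Fin 4) =>
      calc (MvPowerSeries.X β * (pd α W - MvPowerSeries.X β) : PS) d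
          = (MvPowerSeries.X β * pd α W - MvPowerSeries.X β * MvPowerSeries.X β : PS) d := by
            rw [mul_sub]
        _ = (MvPowerSeries.X β * pd α W : PS) d := by
            rw [coeff_sub, coeff_XX β hd h3k, sub_zero]
    rw [hexp 2 0, hexp 3 1] at hGside
    rw [ht2, ht3, hexp 0 2, hexp 1 3] at hGside
    -- final goal
    rw [coeff_add, homPart_coeff_self hd, homPart_coeff_self hd, ← D_eq_Dop,
      ← D_homPart_coeff hd, D, coeff_sub, coeff_sub, coeff_add]
    linarith [hGside]

end S10
end part7
section part8
open S10 MvPowerSeries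

namespace S10

lemma D_neg {R : Type*} [CommRing R] (f : MS R) : D (-f) = -D f := by
  have := D_smul (-1 : R) f
  simpa using this

/-- the main induction -/
lemma MAIN {δ : ℕ} {v : ℕ → ℝ} {G W : PS} (hδ : 4 ≤ δ)
    (hG : IsBGNF G (2 * δ - 2)) (hW : Normalizes (PHO δ v) W G (2 * δ - 2)) :
    (∀ k, 3 ≤ k → k ≤ 2 * δ - 3 → k ≠ δ → homPart k G = 0 ∧ homPart k W = 0)
    ∧ homPart δ G + Dop (homPart δ W) = VsS δ v := by
  obtain ⟨hG0, hG1, hG2, hGker⟩ := hG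
  obtain ⟨hW0, hW1, hW2, hWim, heq⟩ := hW
  have key : ∀ k, 3 ≤ k → k ≤ 2 * δ - 3 → k ≠ δ → homPart k G = 0 ∧ homPart k W = 0 := by
    intro k
    induction k using Nat.strong_induction_on with
    | _ k ih =>
      intro h3k hk hkδ
      have hGmid : ∀ j, 3 ≤ j → j ≤ k - 1 → j ≠ δ → homPart j G = 0 :=
        fun j h1 h2 h3 => (ih j (by omega) h1 (by omega) h3).1
      have hWmid : ∀ j, 3 ≤ j → j ≤ k - 1 → j ≠ δ → homPart j W = 0 :=
        fun j h1 h2 h3 => (ih j (by omega) h1 (by omega) h3).2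
      have heqk := HOMEQ hδ h3k hk hG0 hG1 hG2 hGmid hW1 hW2 hWmid heq
      rw [homog_homPart_zero (VsS_homog δ v) hkδ] at heqk
      have hGeq : homPart k G = D (-(homPart k W)) := by
        rw [D_neg, D_eq_Dop]
        exact eq_neg_of_add_eq_zero_left heqk
      have hGker' : D (homPart k G) = 0 := by
        rw [D_eq_Dop]
        exact hGker k h3k (by omega)
      have hGk0 : homPart k G = 0 := ker_im_D (homPart_homog k G) hGker' hGeq
      have hDW : Dop (homPart k W) = 0 := by
        rw [hGk0, zero_add] at heqk
        exact heqk
      obtain ⟨u, huh, huD⟩ := hWim k h3k (by omega)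
      have hWeq : homPart k W = D u := by rw [D_eq_Dop, huD]
      have hWker : D (homPart k W) = 0 := by rw [D_eq_Dop]; exact hDW
      exact ⟨hGk0, ker_im_D (homPart_homog k W) hWker hWeq⟩
  refine ⟨key, ?_⟩
  have hGmidδ : ∀ j, 3 ≤ j → j ≤ δ - 1 → j ≠ δ → homPart j G = 0 :=
    fun j h1 h2 h3 => (key j h1 (by omega) h3).1
  have hWmidδ : ∀ j, 3 ≤ j → j ≤ δ - 1 → j ≠ δ → homPart j W = 0 :=
    fun j h1 h2 h3 => (key j h1 (by omega) h3).2
  have heqδ := HOMEQ hδ (by omega) (by omega) hG0 hG1 hG2 hGmidδ hW1 hW2 hWmidδ heq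
  rwa [homog_homPart_self (VsS_homog δ v)] at heqδ

end S10
end part8
section part9
open S10 MvPowerSeries

namespace S10

lemma mapC_coeff (f : PS) (d : Fin 4 →₀ ℕ) : mapC f d = ((f d : ℝ) : ℂ) := rfl

lemma mapC_pd (i : Fin 4) (f : PS) : mapC (pd i f) = pd i (mapC f) := by
  funext d
  rw [mapC_coeff, pd_coeff, pd_coeff, mapC_coeff]
  push_cast
  ring

lemma mapC_X (i : Fin 4) : mapC (MvPowerSeries.X i) = MvPowerSeries.X i :=
  MvPowerSeries.map_X _ i

lemma mapC_D (f : PS) : mapC (D f) = D (mapC f) := by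
  rw [D, D, map_sub, map_sub, map_add, map_mul, map_mul, map_mul, map_mul,
    mapC_pd, mapC_pd, mapC_pd, mapC_pd, mapC_X, mapC_X, mapC_X, mapC_X]

lemma mapC_homog {f : PS} {k : ℕ} (h : Homog f k) : Homog (mapC f) k := by
  intro d hd
  rw [mapC_coeff, h d hd]
  exact Complex.ofReal_zero

lemma C_mul_eq_smul (a : ℂ) (f : PSC) : MvPowerSeries.C (σ := Fin 4) (R := ℂ) a * f = a • f := by
  funext d
  rw [coeff_C_mul]
  rfl

lemma D_Z1 : D Z1 = Complex.I • Z1 := by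
  rw [Z1, D_add, D_C_mul, D_X0, D_X2, C_mul_eq_smul, C_mul_eq_smul, smul_add,
    smul_smul, Complex.I_mul_I, neg_one_smul]
  abel

lemma D_Z2 : D Z2 = Complex.I • Z2 := by
  rw [Z2, D_add, D_C_mul, D_X1, D_X3, C_mul_eq_smul, C_mul_eq_smul, smul_add,
    smul_smul, Complex.I_mul_I, neg_one_smul]
  abel

lemma D_Zb1 : D Zb1 = (-Complex.I) • Zb1 := by
  rw [Zb1, D_sub, D_C_mul, D_X0, D_X2, C_mul_eq_smul, C_mul_eq_smul, smul_sub,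
    smul_smul]
  have : -Complex.I * Complex.I = 1 := by
    rw [neg_mul, Complex.I_mul_I, neg_neg]
  rw [this, one_smul, neg_smul]
  abel

lemma D_Zb2 : D Zb2 = (-Complex.I) • Zb2 := by
  rw [Zb2, D_sub, D_C_mul, D_X1, D_X3, C_mul_eq_smul, C_mul_eq_smul, smul_sub,
    smul_smul]
  have : -Complex.I * Complex.I = 1 := by
    rw [neg_mul, Complex.I_mul_I, neg_neg]
  rw [this, one_smul, neg_smul]
  abel

/-- the basic complex monomials -/
def ZM (p q r s : ℕ) : PSC := Z1 ^ p * Z2 ^ q * Zb1 ^ r * Zb2 ^ s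

lemma D_ZM (p q r s : ℕ) :
    D (ZM p q r s) = (((p : ℂ) * Complex.I + (q : ℂ) * Complex.I
      + (r : ℂ) * (-Complex.I)) + (s : ℂ) * (-Complex.I)) • ZM p q r s :=
  D_eigen_mul (D_eigen_mul (D_eigen_mul (D_eigen_pow D_Z1 p) (D_eigen_pow D_Z2 q))
    (D_eigen_pow D_Zb1 r)) (D_eigen_pow D_Zb2 s)

lemma homog_Z1 : Homog Z1 1 := by
  rw [Z1]
  exact (Homog.X 0).add (Homog.C_mul _ (Homog.X 2))

lemma homog_Z2 : Homog Z2 1 := by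
  rw [Z2]
  exact (Homog.X 1).add (Homog.C_mul _ (Homog.X 3))

lemma homog_Zb1 : Homog Zb1 1 := by
  rw [Zb1]
  exact (Homog.X 0).sub (Homog.C_mul _ (Homog.X 2))

lemma homog_Zb2 : Homog Zb2 1 := by
  rw [Zb2]
  exact (Homog.X 1).sub (Homog.C_mul _ (Homog.X 3))

lemma homog_ZM (p q r s : ℕ) : Homog (ZM p q r s) (p + q + r + s) := by
  have h := ((((homog_Z1.pow p).mul (homog_Z2.pow q)).mul (homog_Zb1.pow r)).mul
    (homog_Zb2.pow s))
  have harith : p * 1 + q * 1 + r * 1 + s * 1 = p + q + r + s := by ring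
  rw [harith] at h
  exact h

/-- kill the eigenvalue when balanced -/
lemma D_ZM_zero {p q r s : ℕ} (h : p + q = r + s) : D (ZM p q r s) = 0 := by
  rw [D_ZM]
  have : ((p : ℂ) * Complex.I + (q : ℂ) * Complex.I
      + (r : ℂ) * (-Complex.I)) + (s : ℂ) * (-Complex.I) = 0 := by
    have hc : ((p : ℂ) + q) = ((r : ℂ) + s) := by exact_mod_cast congrArg (Nat.cast : ℕ → ℂ) h
    linear_combination Complex.I * hc
  rw [this, zero_smul]

/-- recover the monomial from `D` when unbalanced -/
lemma ZM_eq_D {p q r s : ℕ} (h : p + q ≠ r + s) :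
    ∃ c : ℂ, D (c • ZM p q r s) = ZM p q r s := by
  set lam : ℂ := ((p : ℂ) * Complex.I + (q : ℂ) * Complex.I
      + (r : ℂ) * (-Complex.I)) + (s : ℂ) * (-Complex.I) with hlam
  have hlam2 : lam = (((p + q : ℕ) : ℂ) - ((r + s : ℕ) : ℂ)) * Complex.I := by
    rw [hlam]
    push_cast
    ring
  have hne : lam ≠ 0 := by
    rw [hlam2]
    refine mul_ne_zero ?_ Complex.I_ne_zero
    intro hc
    rw [sub_eq_zero] at hc
    exact h (by exact_mod_cast hc)
  refine ⟨lam⁻¹, ?_⟩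
  rw [D_smul, D_ZM, ← hlam, smul_smul, inv_mul_cancel₀ hne, one_smul]

end S10
end part9
section part10
open S10 MvPowerSeries

namespace S10

lemma mapC_C (a : ℝ) :
    mapC (MvPowerSeries.C (σ := Fin 4) (R := ℝ) a) = MvPowerSeries.C (σ := Fin 4) (R := ℂ) (a : ℂ) := by
  rw [← MvPowerSeries.monomial_zero_eq_C_apply, ← MvPowerSeries.monomial_zero_eq_C_apply]
  exact MvPowerSeries.map_monomial _ 0 a

lemma natCast_C (n : ℕ) :
    ((n : ℕ) : PSC) = MvPowerSeries.C (σ := Fin 4) (R := ℂ) (n : ℂ) :=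
  (map_natCast (MvPowerSeries.C (σ := Fin 4) (R := ℂ)) n).symm

lemma X0_eq : (MvPowerSeries.X 0 : PSC)
    = MvPowerSeries.C (σ := Fin 4) (R := ℂ) (2⁻¹ : ℂ) * (Z1 + Zb1) := by
  have h : Z1 + Zb1 = MvPowerSeries.X 0 + MvPowerSeries.X 0 := by
    rw [Z1, Zb1]
    ring
  rw [h]
  funext d
  rw [coeff_C_mul, coeff_add]
  ring

lemma X1_eq : (MvPowerSeries.X 1 : PSC)
    = MvPowerSeries.C (σ := Fin 4) (R := ℂ) (2⁻¹ : ℂ) * (Z2 + Zb2) := by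
  have h : Z2 + Zb2 = MvPowerSeries.X 1 + MvPowerSeries.X 1 := by
    rw [Z2, Zb2]
    ring
  rw [h]
  funext d
  rw [coeff_C_mul, coeff_add]
  ring

lemma binom_expand (x y : PSC) (n : ℕ) :
    (x + y) ^ n = ∑ m ∈ Finset.range (n + 1),
      MvPowerSeries.C (σ := Fin 4) (R := ℂ) ((n.choose m : ℂ)) * (x ^ m * y ^ (n - m)) := by
  rw [add_pow]
  refine Finset.sum_congr rfl fun m _ => ?_
  rw [natCast_C]
  ring

/-- the eigenvalue -/
def lamZ (p q r s : ℕ) : ℂ := (((p : ℂ) + q) - ((r : ℂ) + s)) * Complex.I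

lemma D_ZM_scaled {p q r s : ℕ} (h : p + q ≠ r + s) :
    D ((lamZ p q r s)⁻¹ • ZM p q r s) = ZM p q r s := by
  have hlam2 : (((p : ℂ) * Complex.I + (q : ℂ) * Complex.I
      + (r : ℂ) * (-Complex.I)) + (s : ℂ) * (-Complex.I)) = lamZ p q r s := by
    rw [lamZ]
    push_cast
    ring
  have hne : lamZ p q r s ≠ 0 := by
    rw [lamZ]
    refine mul_ne_zero ?_ Complex.I_ne_zero
    intro hc
    rw [sub_eq_zero] at hc
    exact h (by exact_mod_cast hc)
  rw [D_smul, D_ZM, hlam2, smul_smul, inv_mul_cancel₀ hne, one_smul]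

lemma homog_ZM' {p q r s n : ℕ} (h : p + q + r + s = n) : Homog (ZM p q r s) n := by
  rw [← h]
  exact homog_ZM p q r s

/-- per-h expansion of the real monomials into complex ones -/
lemma key_h (δ h : ℕ) (hh : h ≤ δ) :
    (MvPowerSeries.X 0 : PSC) ^ h * (MvPowerSeries.X 1 : PSC) ^ (δ - h)
      = MvPowerSeries.C (σ := Fin 4) (R := ℂ) (((2 : ℂ) ^ δ)⁻¹)
        * ∑ p ∈ Finset.range (h + 1) ×ˢ Finset.range (δ - h + 1),
            MvPowerSeries.C (σ := Fin 4) (R := ℂ) ((h.choose p.1 : ℂ) * ((δ - h).choose p.2 : ℂ))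
              * ZM p.1 p.2 (h - p.1) (δ - h - p.2) := by
  rw [X0_eq, X1_eq, mul_pow, mul_pow, ← map_pow, ← map_pow,
    binom_expand Z1 Zb1 h, binom_expand Z2 Zb2 (δ - h)]
  have hconst : (2⁻¹ : ℂ) ^ h * (2⁻¹ : ℂ) ^ (δ - h) = ((2 : ℂ) ^ δ)⁻¹ := by
    rw [← pow_add]
    have : h + (δ - h) = δ := by omega
    rw [this, inv_pow]
  calc MvPowerSeries.C (σ := Fin 4) (R := ℂ) ((2⁻¹ : ℂ) ^ h)
        * (∑ m ∈ Finset.range (h + 1), MvPowerSeries.C (σ := Fin 4) (R := ℂ) ((h.choose m : ℂ))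
            * (Z1 ^ m * Zb1 ^ (h - m)))
        * (MvPowerSeries.C (σ := Fin 4) (R := ℂ) ((2⁻¹ : ℂ) ^ (δ - h))
          * ∑ n ∈ Finset.range (δ - h + 1),
              MvPowerSeries.C (σ := Fin 4) (R := ℂ) (((δ - h).choose n : ℂ))
                * (Z2 ^ n * Zb2 ^ (δ - h - n)))
      = MvPowerSeries.C (σ := Fin 4) (R := ℂ) ((2⁻¹ : ℂ) ^ h * (2⁻¹ : ℂ) ^ (δ - h))
        * ((∑ m ∈ Finset.range (h + 1), MvPowerSeries.C (σ := Fin 4) (R := ℂ) ((h.choose m : ℂ))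
            * (Z1 ^ m * Zb1 ^ (h - m)))
          * ∑ n ∈ Finset.range (δ - h + 1),
              MvPowerSeries.C (σ := Fin 4) (R := ℂ) (((δ - h).choose n : ℂ))
                * (Z2 ^ n * Zb2 ^ (δ - h - n))) := by
        rw [map_mul]
        ring
    _ = MvPowerSeries.C (σ := Fin 4) (R := ℂ) (((2 : ℂ) ^ δ)⁻¹)
        * ∑ p ∈ Finset.range (h + 1) ×ˢ Finset.range (δ - h + 1),
            MvPowerSeries.C (σ := Fin 4) (R := ℂ) ((h.choose p.1 : ℂ) * ((δ - h).choose p.2 : ℂ))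
              * ZM p.1 p.2 (h - p.1) (δ - h - p.2) := by
        rw [hconst, Finset.sum_mul_sum]
        congr 1
        rw [Finset.sum_product]
        refine Finset.sum_congr rfl fun m _ => ?_
        refine Finset.sum_congr rfl fun n _ => ?_
        rw [map_mul, ZM]
        ring

/-- the diagonal part matches the statement's inner sum -/
lemma diag_part (δ h : ℕ) (hh : h ≤ δ) (heven : Even δ) :
    ∑ p ∈ (Finset.range (h + 1) ×ˢ Finset.range (δ - h + 1)).filter
        (fun p => p.1 + p.2 = δ / 2),
      MvPowerSeries.C (σ := Fin 4) (R := ℂ) ((h.choose p.1 : ℂ) * ((δ - h).choose p.2 : ℂ))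
        * ZM p.1 p.2 (h - p.1) (δ - h - p.2)
    = ∑ m ∈ Finset.Icc (h - δ / 2) (min h (δ / 2)),
        MvPowerSeries.C (σ := Fin 4) (R := ℂ) ((h.choose m : ℂ) * ((δ - h).choose (δ / 2 - m) : ℂ))
          * ZM m (δ / 2 - m) (h - m) ((δ + m) - h - δ / 2) := by
  obtain ⟨t, ht⟩ := heven
  refine Finset.sum_bij' (i := fun (p : ℕ × ℕ) (_ : p ∈ _) => p.1)
    (j := fun (m : ℕ) (_ : m ∈ _) => (m, δ / 2 - m)) ?_ ?_ ?_ ?_ ?_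
  · intro p hp
    simp only [Finset.mem_filter, Finset.mem_product, Finset.mem_range] at hp
    show p.1 ∈ Finset.Icc (h - δ / 2) (min h (δ / 2))
    rw [Finset.mem_Icc]
    omega
  · intro m hm
    rw [Finset.mem_Icc] at hm
    simp only [Finset.mem_filter, Finset.mem_product, Finset.mem_range]
    omega
  · intro p hp
    simp only [Finset.mem_filter, Finset.mem_product, Finset.mem_range] at hp
    ext
    · rfl
    · simp only
      omega
  · intro m hm
    rfl
  · intro p hp
    simp only [Finset.mem_filter, Finset.mem_product, Finset.mem_range] at hp
    have h1 : δ / 2 - p.1 = p.2 := by omega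
    have h2 : δ - h - p.2 = (δ + p.1) - h - δ / 2 := by omega
    rw [h1, h2]

/-- the off-diagonal potential -/
def Uoff (δ h : ℕ) : PSC :=
  ∑ p ∈ (Finset.range (h + 1) ×ˢ Finset.range (δ - h + 1)).filter
      (fun p => ¬ p.1 + p.2 = δ / 2),
    MvPowerSeries.C (σ := Fin 4) (R := ℂ) ((h.choose p.1 : ℂ) * ((δ - h).choose p.2 : ℂ))
      * ((lamZ p.1 p.2 (h - p.1) (δ - h - p.2))⁻¹ • ZM p.1 p.2 (h - p.1) (δ - h - p.2))

lemma Uoff_homog {δ h : ℕ} (hh : h ≤ δ) : Homog (Uoff δ h) δ := by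
  refine Homog.sum _ _ fun p hp => ?_
  simp only [Finset.mem_filter, Finset.mem_product, Finset.mem_range] at hp
  exact Homog.C_mul _ (Homog.smul _ (homog_ZM' (by omega)))

lemma offdiag_part (δ h : ℕ) (hh : h ≤ δ) (heven : Even δ) :
    ∑ p ∈ (Finset.range (h + 1) ×ˢ Finset.range (δ - h + 1)).filter
        (fun p => ¬ p.1 + p.2 = δ / 2),
      MvPowerSeries.C (σ := Fin 4) (R := ℂ) ((h.choose p.1 : ℂ) * ((δ - h).choose p.2 : ℂ))
        * ZM p.1 p.2 (h - p.1) (δ - h - p.2)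
    = D (Uoff δ h) := by
  obtain ⟨t, ht⟩ := heven
  rw [Uoff, D_sum]
  refine Finset.sum_congr rfl fun p hp => ?_
  simp only [Finset.mem_filter, Finset.mem_product, Finset.mem_range] at hp
  rw [D_C_mul, D_ZM_scaled (by omega)]

/-- the kernel component -/
def FF (δ : ℕ) (v : ℕ → ℝ) : PSC :=
  MvPowerSeries.C (σ := Fin 4) (R := ℂ) (((2 : ℂ) ^ δ)⁻¹) *
    ∑ h ∈ Finset.range (δ + 1),
      MvPowerSeries.C (σ := Fin 4) (R := ℂ) ((δ.choose h : ℂ) * ((v h : ℝ) : ℂ)) *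
        ∑ m ∈ Finset.Icc (h - δ / 2) (min h (δ / 2)),
          MvPowerSeries.C (σ := Fin 4) (R := ℂ)
              ((h.choose m : ℂ) * ((δ - h).choose (δ / 2 - m) : ℂ)) *
            (Z1 ^ m * Z2 ^ (δ / 2 - m) * Zb1 ^ (h - m) *
              Zb2 ^ ((δ + m) - h - δ / 2))

lemma FF_homog (δ : ℕ) (v : ℕ → ℝ) (heven : Even δ) : Homog (FF δ v) δ := by
  obtain ⟨t, ht⟩ := heven
  refine Homog.C_mul _ (Homog.sum _ _ fun h hh => ?_)
  rw [Finset.mem_range] at hh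
  refine Homog.C_mul _ (Homog.sum _ _ fun m hm => ?_)
  rw [Finset.mem_Icc] at hm
  exact Homog.C_mul _ (homog_ZM' (by omega))

lemma FF_ker (δ : ℕ) (v : ℕ → ℝ) (heven : Even δ) : D (FF δ v) = 0 := by
  obtain ⟨t, ht⟩ := heven
  rw [FF, D_C_mul, D_sum]
  have hz : ∀ h ∈ Finset.range (δ + 1),
      D (MvPowerSeries.C (σ := Fin 4) (R := ℂ) ((δ.choose h : ℂ) * ((v h : ℝ) : ℂ)) *
        ∑ m ∈ Finset.Icc (h - δ / 2) (min h (δ / 2)),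
          MvPowerSeries.C (σ := Fin 4) (R := ℂ)
              ((h.choose m : ℂ) * ((δ - h).choose (δ / 2 - m) : ℂ)) *
            (Z1 ^ m * Z2 ^ (δ / 2 - m) * Zb1 ^ (h - m) *
              Zb2 ^ ((δ + m) - h - δ / 2))) = 0 := by
    intro h hh
    rw [Finset.mem_range] at hh
    rw [D_C_mul, D_sum]
    have hz2 : ∀ m ∈ Finset.Icc (h - δ / 2) (min h (δ / 2)),
        D (MvPowerSeries.C (σ := Fin 4) (R := ℂ)
              ((h.choose m : ℂ) * ((δ - h).choose (δ / 2 - m) : ℂ)) *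
            (Z1 ^ m * Z2 ^ (δ / 2 - m) * Zb1 ^ (h - m) *
              Zb2 ^ ((δ + m) - h - δ / 2))) = 0 := by
      intro m hm
      rw [Finset.mem_Icc] at hm
      rw [D_C_mul]
      have : (Z1 ^ m * Z2 ^ (δ / 2 - m) * Zb1 ^ (h - m) *
          Zb2 ^ ((δ + m) - h - δ / 2)) = ZM m (δ / 2 - m) (h - m) ((δ + m) - h - δ / 2) := rfl
      rw [this, D_ZM_zero (by omega), mul_zero]
    rw [Finset.sum_congr rfl hz2, Finset.sum_const_zero, mul_zero]
  rw [Finset.sum_congr rfl hz, Finset.sum_const_zero, mul_zero]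

/-- decomposition of the complexified potential -/
lemma VsS_decomp (δ : ℕ) (v : ℕ → ℝ) (hδ : 4 ≤ δ) (heven : Even δ) :
    ∃ W' : PSC, Homog W' δ ∧ mapC (VsS δ v) = FF δ v + D W' := by
  refine ⟨MvPowerSeries.C (σ := Fin 4) (R := ℂ) (((2 : ℂ) ^ δ)⁻¹) *
    ∑ h ∈ Finset.range (δ + 1),
      MvPowerSeries.C (σ := Fin 4) (R := ℂ) ((δ.choose h : ℂ) * ((v h : ℝ) : ℂ)) * Uoff δ h, ?_, ?_⟩
  · refine Homog.C_mul _ (Homog.sum _ _ fun h hh => ?_)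
    rw [Finset.mem_range] at hh
    exact Homog.C_mul _ (Uoff_homog (by omega))
  · rw [VsS, map_sum]
    have hterm : ∀ h ∈ Finset.range (δ + 1),
        mapC (MvPowerSeries.C (σ := Fin 4) (R := ℝ) (v h * (δ.choose h : ℝ))
            * MvPowerSeries.X 0 ^ h * MvPowerSeries.X 1 ^ (δ - h))
          = MvPowerSeries.C (σ := Fin 4) (R := ℂ) ((δ.choose h : ℂ) * ((v h : ℝ) : ℂ))
            * (MvPowerSeries.C (σ := Fin 4) (R := ℂ) (((2 : ℂ) ^ δ)⁻¹)
              * ((∑ p ∈ (Finset.range (h + 1) ×ˢ Finset.range (δ - h + 1)).filter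
                    (fun p => p.1 + p.2 = δ / 2),
                  MvPowerSeries.C (σ := Fin 4) (R := ℂ)
                    ((h.choose p.1 : ℂ) * ((δ - h).choose p.2 : ℂ))
                    * ZM p.1 p.2 (h - p.1) (δ - h - p.2))
                + D (Uoff δ h))) := by
      intro h hh
      rw [Finset.mem_range] at hh
      rw [map_mul, map_mul, mapC_C, map_pow, map_pow, mapC_X, mapC_X, mul_assoc,
        key_h δ h (by omega), ← Finset.sum_filter_add_sum_filter_not _
          (fun p => p.1 + p.2 = δ / 2), offdiag_part δ h (by omega) heven]
      have hc : ((v h * (δ.choose h : ℝ) : ℝ) : ℂ)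
          = (δ.choose h : ℂ) * ((v h : ℝ) : ℂ) := by
        push_cast
        ring
      rw [hc]
    rw [Finset.sum_congr rfl hterm]
    have step1 : ∑ h ∈ Finset.range (δ + 1),
        MvPowerSeries.C (σ := Fin 4) (R := ℂ) ((δ.choose h : ℂ) * ((v h : ℝ) : ℂ))
          * (MvPowerSeries.C (σ := Fin 4) (R := ℂ) (((2 : ℂ) ^ δ)⁻¹)
            * ((∑ p ∈ (Finset.range (h + 1) ×ˢ Finset.range (δ - h + 1)).filter
                  (fun p => p.1 + p.2 = δ / 2),
                MvPowerSeries.C (σ := Fin 4) (R := ℂ)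
                  ((h.choose p.1 : ℂ) * ((δ - h).choose p.2 : ℂ))
                  * ZM p.1 p.2 (h - p.1) (δ - h - p.2))
              + D (Uoff δ h)))
        = MvPowerSeries.C (σ := Fin 4) (R := ℂ) (((2 : ℂ) ^ δ)⁻¹)
            * (∑ h ∈ Finset.range (δ + 1),
              MvPowerSeries.C (σ := Fin 4) (R := ℂ) ((δ.choose h : ℂ) * ((v h : ℝ) : ℂ))
                * ∑ p ∈ (Finset.range (h + 1) ×ˢ Finset.range (δ - h + 1)).filter
                    (fun p => p.1 + p.2 = δ / 2),
                  MvPowerSeries.C (σ := Fin 4) (R := ℂ)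
                    ((h.choose p.1 : ℂ) * ((δ - h).choose p.2 : ℂ))
                    * ZM p.1 p.2 (h - p.1) (δ - h - p.2))
          + MvPowerSeries.C (σ := Fin 4) (R := ℂ) (((2 : ℂ) ^ δ)⁻¹)
            * ∑ h ∈ Finset.range (δ + 1),
              MvPowerSeries.C (σ := Fin 4) (R := ℂ) ((δ.choose h : ℂ) * ((v h : ℝ) : ℂ))
                * D (Uoff δ h) := by
      rw [Finset.mul_sum, Finset.mul_sum, ← Finset.sum_add_distrib]
      exact Finset.sum_congr rfl fun h _ => by ring
    rw [step1]
    have hpart1 : MvPowerSeries.C (σ := Fin 4) (R := ℂ) (((2 : ℂ) ^ δ)⁻¹)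
        * (∑ h ∈ Finset.range (δ + 1),
          MvPowerSeries.C (σ := Fin 4) (R := ℂ) ((δ.choose h : ℂ) * ((v h : ℝ) : ℂ))
            * ∑ p ∈ (Finset.range (h + 1) ×ˢ Finset.range (δ - h + 1)).filter
                (fun p => p.1 + p.2 = δ / 2),
              MvPowerSeries.C (σ := Fin 4) (R := ℂ)
                ((h.choose p.1 : ℂ) * ((δ - h).choose p.2 : ℂ))
                * ZM p.1 p.2 (h - p.1) (δ - h - p.2)) = FF δ v := by
      rw [FF]
      congr 1
      refine Finset.sum_congr rfl fun h hh => ?_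
      rw [Finset.mem_range] at hh
      rw [diag_part δ h (by omega) heven]
      rfl
    have hpart2 : MvPowerSeries.C (σ := Fin 4) (R := ℂ) (((2 : ℂ) ^ δ)⁻¹)
        * (∑ h ∈ Finset.range (δ + 1),
          MvPowerSeries.C (σ := Fin 4) (R := ℂ) ((δ.choose h : ℂ) * ((v h : ℝ) : ℂ)) * D (Uoff δ h))
        = D (MvPowerSeries.C (σ := Fin 4) (R := ℂ) (((2 : ℂ) ^ δ)⁻¹)
          * ∑ h ∈ Finset.range (δ + 1),
            MvPowerSeries.C (σ := Fin 4) (R := ℂ) ((δ.choose h : ℂ) * ((v h : ℝ) : ℂ)) * Uoff δ h) := by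
      rw [D_C_mul, D_sum]
      congr 1
      exact Finset.sum_congr rfl fun h _ => (D_C_mul _ _).symm
    rw [hpart1, hpart2]

end S10
end part10

/-- For an even-degree `δ`-PHO (`δ ≥ 4`), the homogeneous parts of the
BGNF vanish in degrees `3,…,δ-1` and `δ+1,…,2δ-3`, and the degree-`δ` part is the kernel
component of `V` with respect to `D`, written in the complex variables `ζ, ζ̄`. -/
theorem statement10 (δ : ℕ) (hδ : 4 ≤ δ) (heven : Even δ) (v : ℕ → ℝ)
    (G W : PS) (hG : IsBGNF G (2 * δ - 2))
    (hW : Normalizes (PHO δ v) W G (2 * δ - 2)) :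
    (∀ k, (3 ≤ k ∧ k ≤ δ - 1) ∨ (δ + 1 ≤ k ∧ k ≤ 2 * δ - 3) → homPart k G = 0)
      ∧ mapC (homPart δ G) =
          MvPowerSeries.C (σ := Fin 4) (R := ℂ) (((2 : ℂ) ^ δ)⁻¹) *
            ∑ h ∈ Finset.range (δ + 1),
              MvPowerSeries.C (σ := Fin 4) (R := ℂ) ((δ.choose h : ℂ) * ((v h : ℝ) : ℂ)) *
                ∑ m ∈ Finset.Icc (h - δ / 2) (min h (δ / 2)),
                  MvPowerSeries.C (σ := Fin 4) (R := ℂ)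
                      ((h.choose m : ℂ) * ((δ - h).choose (δ / 2 - m) : ℂ)) *
                    (Z1 ^ m * Z2 ^ (δ / 2 - m) * Zb1 ^ (h - m) *
                      Zb2 ^ ((δ + m) - h - δ / 2)) := by
  obtain ⟨hpart, heqδ⟩ := S10.MAIN hδ hG hW
  constructor
  · rintro k (⟨h1, h2⟩ | ⟨h1, h2⟩)
    · exact (hpart k h1 (by omega) (by omega)).1
    · exact (hpart k (by omega) h2 (by omega)).1
  · have hGδ : homPart δ G = S10.VsS δ v - Dop (homPart δ W) := eq_sub_of_add_eq heqδ
    have hmap : mapC (homPart δ G)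
        = mapC (S10.VsS δ v) - S10.D (mapC (homPart δ W)) := by
      rw [hGδ, map_sub, ← S10.D_eq_Dop, S10.mapC_D]
    obtain ⟨W', hW'h, hdec⟩ := S10.VsS_decomp δ v hδ heven
    have hker : S10.D (mapC (homPart δ G) - S10.FF δ v) = 0 := by
      rw [S10.D_sub, S10.FF_ker δ v heven, sub_zero, ← S10.mapC_D, S10.D_eq_Dop,
        hG.2.2.2 δ (by omega) (by omega)]
      exact map_zero mapC
    have him : mapC (homPart δ G) - S10.FF δ v
        = S10.D (W' - mapC (homPart δ W)) := by
      rw [S10.D_sub, hmap, hdec]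
      ring
    have hhom : S10.Homog (mapC (homPart δ G) - S10.FF δ v) δ :=
      (S10.mapC_homog (S10.homPart_homog δ G)).sub (S10.FF_homog δ v heven)
    have hz := S10.ker_im_D (𝕜 := ℂ) hhom hker him
    have hfin : mapC (homPart δ G) = S10.FF δ v := sub_eq_zero.mp hz
    exact hfin

end
end
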